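/- arXiv:1206.3189 — 7 statements merged into one kernel-verified Lean document; each statement's English description precedes it below -/
import Mathlib

section
/- For every η > 0, the function ρ ↦ Q(√(2ρη)) is completely monotone on (0,∞), where Q(t) = ∫_t^∞ (1/√(2π)) exp(-s²/2) ds is the Gaussian tail function. -/
open MeasureTheory Set Real

/-- A function is completely monotone on `(0,∞)` if it is smooth there and all
its derivatives alternate in sign: `(-1)^n g^(n)(x) ≥ 0` for `x > 0`. -/
def CompletelyMonotoneOn (g : ℝ → ℝ) : Prop :=
  ContDiffOn ℝ (⊤ : ℕ∞) g (Set.Ioi 0) ∧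
    ∀ n : ℕ, ∀ x ∈ Set.Ioi (0 : ℝ), 0 ≤ (-1 : ℝ) ^ n * iteratedDerivWithin n g (Set.Ioi 0) x

/-- The Gaussian Q-function: `Q t = (1/√(2π)) ∫ₜ^∞ exp(-s²/2) ds`. -/
noncomputable def gaussQ (t : ℝ) : ℝ :=
  ∫ s in Set.Ioi t, (1 / Real.sqrt (2 * Real.pi)) * Real.exp (-s ^ 2 / 2)

section CMQAux
open Finset Filter Complex

noncomputable def hfun (η u : ℝ) : ℝ :=
  (η / Real.sqrt (2*η) / Real.sqrt (2*Real.pi)) * (Real.exp (-(η*u)) * u ^ (-(1/2) : ℝ))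

lemma hfun_nonneg (η : ℝ) (hη : 0 ≤ η) {u : ℝ} (hu : 0 ≤ u) : 0 ≤ hfun η u := by
  unfold hfun
  have := Real.rpow_nonneg hu (-(1/2) : ℝ)
  positivity

lemma hfun_cont (η : ℝ) : ContinuousOn (hfun η) (Set.Ioi 0) := by
  apply ContinuousOn.mul continuousOn_const
  apply ContinuousOn.mul (Continuous.continuousOn (by continuity))
  intro u hu
  exact (Real.continuousAt_rpow_const u _ (Or.inl (ne_of_gt (Set.mem_Ioi.1 hu)))).continuousWithinAt

lemma hfun_meas (η : ℝ) : Measurable (hfun η) := by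
  apply Measurable.mul measurable_const
  exact ((Real.measurable_exp.comp (measurable_id.const_mul η).neg)).mul
    (measurable_id.pow_const _)

lemma hfun_integrable (η : ℝ) (hη : 0 < η) {x : ℝ} (hx : 0 < x) :
    IntegrableOn (hfun η) (Set.Ioi x) := by
  set c : ℝ := η / Real.sqrt (2*η) / Real.sqrt (2*Real.pi) with hc
  have hc0 : 0 ≤ c := by positivity
  have hbd : ∀ u ∈ Set.Ioi x, ‖hfun η u‖ ≤ (c * x ^ (-(1/2) : ℝ)) * Real.exp (-η*u) := by
    intro u hu
    have hu0 : 0 < u := hx.trans (Set.mem_Ioi.1 hu)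
    have h1 : u ^ (-(1/2) : ℝ) ≤ x ^ (-(1/2) : ℝ) :=
      Real.rpow_le_rpow_of_nonpos hx (Set.mem_Ioi.1 hu).le (by norm_num)
    rw [Real.norm_eq_abs, _root_.abs_of_nonneg (hfun_nonneg η hη.le hu0.le)]
    unfold hfun
    rw [show (c * x ^ (-(1/2):ℝ)) * Real.exp (-η*u)
        = c * (Real.exp (-(η*u)) * x ^ (-(1/2):ℝ)) by rw [neg_mul]; ring]
    exact mul_le_mul_of_nonneg_left
      (mul_le_mul_of_nonneg_left h1 (Real.exp_pos _).le) hc0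
  refine Integrable.mono' ((exp_neg_integrableOn_Ioi x hη).const_mul (c * x ^ (-(1/2) : ℝ)))
    ((hfun_meas η).aestronglyMeasurable.restrict) ?_
  exact (ae_restrict_iff' measurableSet_Ioi).2 (Filter.Eventually.of_forall hbd)

lemma integral_hfun_nonneg (η : ℝ) (hη : 0 < η) {x : ℝ} (hx : 0 < x) :
    0 ≤ ∫ u in Set.Ioi x, hfun η u :=
  setIntegral_nonneg measurableSet_Ioi fun u hu => hfun_nonneg η hη.le (hx.trans (Set.mem_Ioi.1 hu)).le

lemma hasDerivAt_integral_hfun (η : ℝ) (hη : 0 < η) {x : ℝ} (hx : 0 < x) :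
    HasDerivAt (fun y => ∫ u in Set.Ioi y, hfun η u) (-(hfun η x)) x := by
  set a : ℝ := x/2 with ha
  have hax : a < x := by simp [ha]; linarith
  have ha0 : 0 < a := by positivity
  have key : ∀ y ∈ Set.Ioi a, (∫ u in Set.Ioi y, hfun η u)
      = (∫ u in Set.Ioi a, hfun η u) - ∫ t in a..y, hfun η t := by
    intro y hy
    have hy0 : a < y := Set.mem_Ioi.1 hy
    rw [intervalIntegral.integral_of_le hy0.le]
    have hsplit : (∫ u in Set.Ioi a, hfun η u)
        = (∫ u in Set.Ioc a y, hfun η u) + ∫ u in Set.Ioi y, hfun η u := by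
      rw [← setIntegral_union (Set.Ioc_disjoint_Ioi le_rfl) measurableSet_Ioi
        ((hfun_integrable η hη ha0).mono_set Set.Ioc_subset_Ioi_self)
        ((hfun_integrable η hη (ha0.trans hy0)))]
      rw [Set.Ioc_union_Ioi_eq_Ioi hy0.le]
    rw [hsplit]; ring
  have hder : HasDerivAt (fun y => (∫ u in Set.Ioi a, hfun η u) - ∫ t in a..y, hfun η t)
      (-(hfun η x)) x := by
    have h1 : HasDerivAt (fun y => ∫ t in a..y, hfun η t) (hfun η x) x := by
      refine intervalIntegral.integral_hasDerivAt_right ?_ ?_ ?_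
      · rw [intervalIntegrable_iff_integrableOn_Ioc_of_le hax.le]
        exact (hfun_integrable η hη ha0).mono_set Set.Ioc_subset_Ioi_self
      · exact (hfun_cont η).stronglyMeasurableAtFilter isOpen_Ioi x hx
      · exact (hfun_cont η).continuousAt (isOpen_Ioi.mem_nhds hx)
    simpa [Pi.sub_def] using (hasDerivAt_const x _).sub h1
  refine hder.congr_of_eventuallyEq ?_
  filter_upwards [isOpen_Ioi.mem_nhds (Set.mem_Ioi.2 hax)] with y hy using key y hy

lemma gaussQ_eq_integral_hfun (η : ℝ) (hη : 0 < η) (x : ℝ) (hx : 0 < x) :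
    gaussQ (Real.sqrt (2*x*η)) = ∫ u in Set.Ioi x, hfun η u := by
  rw [gaussQ]
  have himg : (fun u => Real.sqrt (2*u*η)) '' (Set.Ioi x) = Set.Ioi (Real.sqrt (2*x*η)) := by
    ext y
    constructor
    · rintro ⟨u, hu, rfl⟩
      exact Real.sqrt_lt_sqrt (by positivity) (by nlinarith [Set.mem_Ioi.1 hu])
    · intro hy
      have hy0 : 0 < y := lt_of_le_of_lt (Real.sqrt_nonneg _) hy
      refine ⟨y^2/(2*η), ?_, ?_⟩
      · have : 2*x*η < y^2 := by
          have := Real.sq_sqrt (by positivity : (0:ℝ) ≤ 2*x*η)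
          nlinarith [Set.mem_Ioi.1 hy, Real.sqrt_nonneg (2*x*η)]
        rw [Set.mem_Ioi]; rw [lt_div_iff₀ (by positivity)]; nlinarith
      · show Real.sqrt (2*(y^2/(2*η))*η) = y
        rw [show 2*(y^2/(2*η))*η = y^2 by field_simp]
        exact Real.sqrt_sq hy0.le
  have hderiv : ∀ u ∈ Set.Ioi x, HasDerivWithinAt (fun u => Real.sqrt (2*u*η))
      (η / Real.sqrt (2*u*η)) (Set.Ioi x) u := by
    intro u hu
    have hu0 : 0 < u := hx.trans (Set.mem_Ioi.1 hu)
    have h1 : HasDerivAt (fun u : ℝ => 2*u*η) (2*η) u := by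
      simpa using ((hasDerivAt_id u).const_mul 2).mul_const η
    have := (Real.hasDerivAt_sqrt (by positivity : (2*u*η) ≠ 0)).comp u h1
    exact this.hasDerivWithinAt.congr_deriv
      (by rw [div_mul_eq_mul_div, one_mul, mul_div_mul_left _ _ two_ne_zero])
  have hinj : Set.InjOn (fun u => Real.sqrt (2*u*η)) (Set.Ioi x) := by
    intro a ha b hb hab
    have ha0 : 0 < a := hx.trans (Set.mem_Ioi.1 ha)
    have hb0 : 0 < b := hx.trans (Set.mem_Ioi.1 hb)
    have h := (Real.sqrt_inj (by positivity) (by positivity)).1 hab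
    nlinarith
  rw [← himg, integral_image_eq_integral_abs_deriv_smul measurableSet_Ioi hderiv hinj]
  refine setIntegral_congr_fun measurableSet_Ioi (fun u hu => ?_)
  have hu0 : 0 < u := hx.trans (Set.mem_Ioi.1 hu)
  have hsq : Real.sqrt (2*u*η) ^ 2 = 2*u*η := Real.sq_sqrt (by positivity)
  rw [smul_eq_mul, abs_of_pos (by positivity), hsq]
  rw [hfun]
  rw [show (2:ℝ)*u*η = 2*η*u by ring, Real.sqrt_mul (by positivity) u,
    Real.rpow_neg hu0.le, ← Real.sqrt_eq_rpow]
  have h2η : (0:ℝ) < Real.sqrt (2*η) := Real.sqrt_pos.2 (by positivity)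
  have hsu : (0:ℝ) < Real.sqrt u := Real.sqrt_pos.2 hu0
  field_simp

lemma key_induction (η : ℝ) (hη : 0 < η) (G : ℝ → ℝ)
    (hG : ∀ x ∈ Set.Ioi (0:ℝ), deriv G x = -(hfun η x)) (n : ℕ) :
    ∃ m : ℕ, ∃ c : ℕ → ℝ, (∀ k, 0 ≤ c k) ∧ (∀ k, m < k → c k = 0) ∧
      ∀ x ∈ Set.Ioi (0:ℝ), deriv^[n+1] G x
        = (-1)^(n+1) * (Real.exp (-(η*x)) *
            ∑ k ∈ Finset.range (m+1), c k * x ^ (-(1/2:ℝ) - k)) := by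
  induction n with
  | zero =>
    refine ⟨0, fun k => if k = 0 then η / Real.sqrt (2*η) / Real.sqrt (2*Real.pi) else 0,
      fun k => by dsimp only; split <;> positivity, fun k hk => if_neg (by omega), ?_⟩
    intro x hx
    have h1 : deriv^[0+1] G x = -(hfun η x) := by
      rw [show (0+1) = 1 from rfl, Function.iterate_one]; exact hG x hx
    rw [h1]
    simp only [hfun, zero_add, Finset.sum_range_one, if_pos rfl, if_true, Nat.cast_zero, sub_zero]
    ring
  | succ n ih =>
    obtain ⟨m, c, hc0, hcv, hder⟩ := ih
    refine ⟨m+1, fun k => η * c k + (if k = 0 then 0 else ((k:ℝ) - 1/2) * c (k-1)),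
      ?_, ?_, ?_⟩
    · intro k
      have h1 : (0:ℝ) ≤ η * c k := mul_nonneg hη.le (hc0 k)
      dsimp only; split
      · simpa using h1
      · rename_i hk
        have : (1:ℝ) ≤ (k:ℝ) := by exact_mod_cast Nat.one_le_iff_ne_zero.2 hk
        have := hc0 (k-1)
        nlinarith
    · intro k hk
      have h1 : c k = 0 := hcv k (by omega)
      have h2 : c (k-1) = 0 := hcv (k-1) (by omega)
      simp [h1, h2]
    · intro x hx
      have hx0 : (0:ℝ) < x := Set.mem_Ioi.1 hx
      -- deriv^[n+2] G x = deriv (deriv^[n+1] G) x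
      rw [Function.iterate_succ_apply' deriv (n+1) G]
      set F : ℝ → ℝ := fun y => (-1)^(n+1) * (Real.exp (-(η*y)) *
          ∑ k ∈ Finset.range (m+1), c k * y ^ (-(1/2:ℝ) - k)) with hF
      have hEq : deriv^[n+1] G =ᶠ[nhds x] F := by
        filter_upwards [isOpen_Ioi.mem_nhds hx] with y hy using hder y hy
      rw [hEq.deriv_eq]
      -- compute deriv F x
      have hexp : HasDerivAt (fun y : ℝ => Real.exp (-(η*y))) (-η * Real.exp (-(η*x))) x := by
        have h1 : HasDerivAt (fun y : ℝ => -(η*y)) (-η) x := by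
          simpa [Pi.neg_def] using ((hasDerivAt_id x).const_mul η).neg
        simpa [mul_comm, Function.comp_def] using (Real.hasDerivAt_exp (-(η*x))).comp x h1
      have hsum : HasDerivAt (fun y : ℝ => ∑ k ∈ Finset.range (m+1), c k * y ^ (-(1/2:ℝ) - k))
          (∑ k ∈ Finset.range (m+1), c k * ((-(1/2:ℝ) - k) * x ^ (-(1/2:ℝ) - k - 1))) x := by
        refine HasDerivAt.fun_sum fun k _ => ?_
        exact (Real.hasDerivAt_rpow_const (Or.inl hx0.ne')).const_mul (c k)
      have hFder : HasDerivAt F ((-1)^(n+1) *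
          ((-η * Real.exp (-(η*x))) * (∑ k ∈ Finset.range (m+1), c k * x ^ (-(1/2:ℝ) - k))
            + Real.exp (-(η*x)) *
              ∑ k ∈ Finset.range (m+1), c k * ((-(1/2:ℝ) - k) * x ^ (-(1/2:ℝ) - k - 1)))) x :=
        (hexp.mul hsum).const_mul _
      rw [hFder.deriv]
      -- algebraic identity
      have hsum_eq : ∑ k ∈ Finset.range (m+1+1),
          (η * c k + (if k = 0 then 0 else ((k:ℝ) - 1/2) * c (k-1))) * x ^ (-(1/2:ℝ) - k)
          = η * (∑ k ∈ Finset.range (m+1), c k * x ^ (-(1/2:ℝ) - k))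
            - ∑ k ∈ Finset.range (m+1), c k * ((-(1/2:ℝ) - k) * x ^ (-(1/2:ℝ) - k - 1)) := by
        have e1 : ∀ k ∈ Finset.range (m+1+1),
            (η * c k + (if k = 0 then 0 else ((k:ℝ) - 1/2) * c (k-1))) * x ^ (-(1/2:ℝ) - k)
            = η * (c k * x ^ (-(1/2:ℝ) - k))
              + (if k = 0 then 0 else ((k:ℝ) - 1/2) * c (k-1)) * x ^ (-(1/2:ℝ) - k) :=
          fun k _ => by ring
        rw [Finset.sum_congr rfl e1, Finset.sum_add_distrib, ← Finset.mul_sum]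
        rw [Finset.sum_range_succ (fun k => c k * x ^ (-(1/2:ℝ) - (k:ℝ))) (m+1)]
        rw [hcv (m+1) (by omega)]
        rw [Finset.sum_range_succ'
          (fun k => (if k = 0 then 0 else ((k:ℝ) - 1/2) * c (k-1)) * x ^ (-(1/2:ℝ) - (k:ℝ))) (m+1)]
        have e2 : ∀ i ∈ Finset.range (m+1),
            (if i+1 = 0 then 0 else (((i+1:ℕ):ℝ) - 1/2) * c (i+1-1)) * x ^ (-(1/2:ℝ) - ((i+1:ℕ):ℝ))
            = -(c i * ((-(1/2:ℝ) - i) * x ^ (-(1/2:ℝ) - (i:ℝ) - 1))) := by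
          intro i _
          rw [if_neg (by omega)]
          have : (-(1/2:ℝ) - ((i+1:ℕ):ℝ)) = (-(1/2:ℝ) - (i:ℝ) - 1) := by push_cast; ring
          rw [this]
          push_cast
          ring
        rw [Finset.sum_congr rfl e2, Finset.sum_neg_distrib]
        simp only [if_pos rfl, if_true, zero_mul, add_zero, mul_zero]
        ring_nf
      rw [hsum_eq]
      ring

noncomputable def hr (η u : ℝ) : ℝ := Real.exp (-(η*u)) * u ^ (-(1/2) : ℝ)

noncomputable def Hc (η : ℝ) (z : ℂ) (t : ℝ) : ℂ :=
  Complex.exp (-(↑η*(z+↑t))) * (z+↑t) ^ (-(1/2) : ℂ)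

noncomputable def Gc (η : ℝ) (z : ℂ) : ℂ := ∫ t in Set.Ioi (0:ℝ), Hc η z t

lemma re_pos_add (z : ℂ) (hz : 0 < z.re) {t : ℝ} (ht : 0 ≤ t) : 0 < (z + ↑t).re := by
  simp only [Complex.add_re, Complex.ofReal_re]; linarith

lemma Hc_contOn (η : ℝ) (z : ℂ) (hz : 0 < z.re) :
    ContinuousOn (fun t : ℝ => Hc η z t) (Set.Ioi 0) := by
  intro t ht
  have ht0 : (0:ℝ) < t := Set.mem_Ioi.1 ht
  apply ContinuousWithinAt.mul
  · exact ((Complex.continuous_exp.comp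
      ((continuous_const.mul (continuous_const.add Complex.continuous_ofReal)).neg)).continuousAt).continuousWithinAt
  · have hc : ContinuousAt (fun w : ℂ => w ^ (-(1/2):ℂ)) (z + ↑t) :=
      continuousAt_cpow_const (Complex.mem_slitPlane_iff.2 (Or.inl (re_pos_add z hz ht0.le)))
    have hg : ContinuousAt (fun s : ℝ => z + (s:ℂ)) t :=
      (continuous_const.add Complex.continuous_ofReal).continuousAt
    have : ContinuousAt (fun s : ℝ => (z + (s:ℂ)) ^ (-(1/2):ℂ)) t := ContinuousAt.comp' (x := t) hc hg
    exact this.continuousWithinAt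

lemma norm_Hc_le (η : ℝ) (hη : 0 < η) (z : ℂ) (hz : 0 < z.re) {δ : ℝ} (hδ : 0 < δ)
    (hδz : δ ≤ z.re) {t : ℝ} (ht : 0 ≤ t) :
    ‖Hc η z t‖ ≤ δ ^ (-(1/2):ℝ) * Real.exp (-η*t) := by
  have hre : 0 < (z+↑t).re := re_pos_add z hz ht
  have hre' : (z+↑t).re = z.re + t := by simp
  have habs : δ ≤ ‖z+↑t‖ := by
    refine le_trans ?_ (Complex.re_le_norm _)
    rw [hre']; linarith
  have h1 : ‖Hc η z t‖ = Real.exp (-(η * (z.re + t))) * ‖(z+↑t) ^ (-(1/2):ℂ)‖ := by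
    rw [Hc, norm_mul, Complex.norm_exp]
    congr 2
    simp [Complex.mul_re]
  rw [h1]
  have h2 : ‖(z+↑t) ^ (-(1/2):ℂ)‖ ≤ δ ^ (-(1/2):ℝ) := by
    have hb := norm_cpow_le (z+↑t) (-(1/2):ℂ)
    have him : ((-(1/2):ℂ)).im = 0 := by norm_num
    have hre2 : ((-(1/2):ℂ)).re = (-(1/2):ℝ) := by norm_num
    rw [him, hre2, mul_zero, Real.exp_zero, div_one] at hb
    exact hb.trans (Real.rpow_le_rpow_of_nonpos hδ habs (by norm_num))
  have h3 : Real.exp (-(η * (z.re + t))) ≤ Real.exp (-η*t) := by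
    apply Real.exp_le_exp.2; nlinarith
  calc Real.exp (-(η * (z.re + t))) * ‖(z+↑t) ^ (-(1/2):ℂ)‖
      ≤ Real.exp (-η*t) * (δ ^ (-(1/2):ℝ)) :=
        mul_le_mul h3 h2 (norm_nonneg _) (Real.exp_pos _).le
    _ = δ ^ (-(1/2):ℝ) * Real.exp (-η*t) := by ring


noncomputable def Hc' (η : ℝ) (z : ℂ) (t : ℝ) : ℂ :=
  -↑η * Complex.exp (-(↑η*(z+↑t))) * (z+↑t) ^ (-(1/2):ℂ)
    + Complex.exp (-(↑η*(z+↑t))) * ((-(1/2):ℂ) * (z+↑t) ^ (-(3/2):ℂ))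

lemma hasDerivAt_Hc (η : ℝ) (z : ℂ) (hz : 0 < z.re) {t : ℝ} (ht : 0 ≤ t) :
    HasDerivAt (fun w => Hc η w t) (Hc' η z t) z := by
  have hre : 0 < (z+↑t).re := re_pos_add z hz ht
  have hb : HasDerivAt (fun w : ℂ => w + (t:ℂ)) 1 z := by
    simpa using (hasDerivAt_id z).add_const (t:ℂ)
  have h1 : HasDerivAt (fun w : ℂ => Complex.exp (-(↑η*(w+↑t))))
      (-↑η * Complex.exp (-(↑η*(z+↑t)))) z := by
    have hlin : HasDerivAt (fun w : ℂ => -(↑η*(w+↑t))) (-↑η) z := by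
      simpa [Pi.neg_def] using ((hb.const_mul (η:ℂ)).neg)
    simpa [mul_comm, Function.comp_def] using (Complex.hasDerivAt_exp _).comp z hlin
  have h2 : HasDerivAt (fun w : ℂ => (w+↑t) ^ (-(1/2):ℂ))
      ((-(1/2):ℂ) * (z+↑t) ^ (-(3/2):ℂ)) z := by
    have := HasDerivAt.cpow_const (c := (-(1/2):ℂ)) hb
      (Complex.mem_slitPlane_iff.2 (Or.inl hre))
    rw [show ((-(1/2):ℂ) - 1) = (-(3/2):ℂ) by norm_num] at this
    simpa using this
  simpa [Hc, Hc', Pi.mul_def] using h1.mul h2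

lemma norm_Hc'_le (η : ℝ) (hη : 0 < η) (z : ℂ) (hz : 0 < z.re) {δ : ℝ} (hδ : 0 < δ)
    (hδz : δ ≤ z.re) {t : ℝ} (ht : 0 ≤ t) :
    ‖Hc' η z t‖ ≤ (η * δ ^ (-(1/2):ℝ) + (1/2) * δ ^ (-(3/2):ℝ)) * Real.exp (-η*t) := by
  have hre' : (z+↑t).re = z.re + t := by simp
  have habs : δ ≤ ‖z+↑t‖ := by
    refine le_trans ?_ (Complex.re_le_norm _)
    rw [hre']; linarith
  have hexp : ‖Complex.exp (-(↑η*(z+↑t)))‖ = Real.exp (-(η * (z.re + t))) := by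
    rw [Complex.norm_exp]; congr 1; simp [Complex.mul_re]
  have h3 : Real.exp (-(η * (z.re + t))) ≤ Real.exp (-η*t) := by
    apply Real.exp_le_exp.2; nlinarith
  have hcpow : ∀ r : ℝ, r < 0 → ‖(z+↑t) ^ (r:ℂ)‖ ≤ δ ^ r := by
    intro r hr
    have hb := norm_cpow_le (z+↑t) (r:ℂ)
    rw [Complex.ofReal_im, Complex.ofReal_re, mul_zero, Real.exp_zero, div_one] at hb
    exact hb.trans (Real.rpow_le_rpow_of_nonpos hδ habs hr.le)
  have e1 : ((-(1/2):ℂ)) = ((-(1/2):ℝ):ℂ) := by norm_num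
  have e2 : ((-(3/2):ℂ)) = ((-(3/2):ℝ):ℂ) := by norm_num
  calc ‖Hc' η z t‖
      ≤ ‖-↑η * Complex.exp (-(↑η*(z+↑t))) * (z+↑t) ^ (-(1/2):ℂ)‖
        + ‖Complex.exp (-(↑η*(z+↑t))) * ((-(1/2):ℂ) * (z+↑t) ^ (-(3/2):ℂ))‖ := norm_add_le _ _
    _ ≤ η * δ ^ (-(1/2):ℝ) * Real.exp (-η*t) + (1/2) * δ ^ (-(3/2):ℝ) * Real.exp (-η*t) := by
        apply add_le_add
        · rw [norm_mul, norm_mul]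
          simp only [hexp, norm_neg, Complex.norm_real, Real.norm_eq_abs,
            abs_of_pos hη]
          rw [e1]
          calc η * Real.exp (-(η * (z.re + t))) * ‖(z+↑t) ^ (((-(1/2):ℝ)):ℂ)‖
              ≤ η * Real.exp (-η*t) * (δ ^ (-(1/2):ℝ)) := by
                apply mul_le_mul (mul_le_mul le_rfl h3 (Real.exp_pos _).le hη.le)
                  (hcpow _ (by norm_num)) (norm_nonneg _) (by positivity)
            _ = η * δ ^ (-(1/2):ℝ) * Real.exp (-η*t) := by ring
        · rw [norm_mul, norm_mul]
          simp only [hexp]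
          have habs12 : ‖(-(1/2):ℂ)‖ = 1/2 := by
            rw [norm_neg]; norm_num [Complex.norm_of_nonneg]
          rw [habs12, e2]
          calc Real.exp (-(η * (z.re + t))) * ((1/2) * ‖(z+↑t) ^ (((-(3/2):ℝ)):ℂ)‖)
              ≤ Real.exp (-η*t) * ((1/2) * (δ ^ (-(3/2):ℝ))) := by
                apply mul_le_mul h3 (by
                  apply mul_le_mul le_rfl (hcpow _ (by norm_num)) (norm_nonneg _) (by norm_num))
                  (by positivity) (Real.exp_pos _).le
            _ = (1/2) * δ ^ (-(3/2):ℝ) * Real.exp (-η*t) := by ring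
    _ = (η * δ ^ (-(1/2):ℝ) + (1/2) * δ ^ (-(3/2):ℝ)) * Real.exp (-η*t) := by ring

lemma Hc'_contOn (η : ℝ) (z : ℂ) (hz : 0 < z.re) :
    ContinuousOn (fun t : ℝ => Hc' η z t) (Set.Ioi 0) := by
  intro t ht
  have ht0 : (0:ℝ) < t := Set.mem_Ioi.1 ht
  have hg : ContinuousAt (fun s : ℝ => z + (s:ℂ)) t :=
    (continuous_const.add Complex.continuous_ofReal).continuousAt
  have hsl := Complex.mem_slitPlane_iff.2 (Or.inl (re_pos_add z hz ht0.le))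
  have hexp : ContinuousAt (fun s : ℝ => Complex.exp (-(↑η*(z+↑s)))) t :=
    ((Complex.continuous_exp.comp
      ((continuous_const.mul (continuous_const.add Complex.continuous_ofReal)).neg)).continuousAt)
  have hp1 : ContinuousAt (fun s : ℝ => (z + (s:ℂ)) ^ (-(1/2):ℂ)) t :=
    ContinuousAt.comp' (x := t) (continuousAt_cpow_const hsl) hg
  have hp2 : ContinuousAt (fun s : ℝ => (z + (s:ℂ)) ^ (-(3/2):ℂ)) t :=
    ContinuousAt.comp' (x := t) (continuousAt_cpow_const hsl) hg
  exact (((continuousAt_const.mul hexp).mul hp1).add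
    (hexp.mul (continuousAt_const.mul hp2))).continuousWithinAt

lemma Hc_integrable (η : ℝ) (hη : 0 < η) (z : ℂ) (hz : 0 < z.re) :
    IntegrableOn (fun t => Hc η z t) (Set.Ioi 0) := by
  refine Integrable.mono' (((exp_neg_integrableOn_Ioi 0 hη)).const_mul (z.re ^ (-(1/2):ℝ)))
    ((Hc_contOn η z hz).aestronglyMeasurable measurableSet_Ioi) ?_
  refine (ae_restrict_iff' measurableSet_Ioi).2 (Filter.Eventually.of_forall fun t ht => ?_)
  exact norm_Hc_le η hη z hz hz le_rfl (Set.mem_Ioi.1 ht).le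

lemma Gc_differentiableOn (η : ℝ) (hη : 0 < η) :
    DifferentiableOn ℂ (Gc η) {z : ℂ | 0 < z.re} := by
  intro z₀ hz₀
  have hz₀re : 0 < z₀.re := hz₀
  set ε : ℝ := z₀.re/2 with hε
  have hεpos : 0 < ε := by positivity
  have hball : ∀ z ∈ Metric.ball z₀ ε, ε ≤ z.re ∧ 0 < z.re := by
    intro z hzb
    have h1 : ‖z - z₀‖ < ε := by
      simpa [Complex.dist_eq] using Metric.mem_ball.1 hzb
    have h2 : |(z - z₀).re| ≤ ‖z - z₀‖ := Complex.abs_re_le_norm _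
    have h3 : (z - z₀).re = z.re - z₀.re := by simp
    rw [h3] at h2
    constructor
    · rw [hε] at *; cases abs_le.1 h2 with | intro hl hr => linarith
    · rw [hε] at *; cases abs_le.1 h2 with | intro hl hr => linarith
  have key := hasDerivAt_integral_of_dominated_loc_of_deriv_le
    (μ := volume.restrict (Set.Ioi (0:ℝ))) (F := fun z t => Hc η z t)
    (F' := fun z t => Hc' η z t) (x₀ := z₀)
    (bound := fun t => (η * ε ^ (-(1/2):ℝ) + (1/2) * ε ^ (-(3/2):ℝ)) * Real.exp (-η*t))
    (Metric.ball_mem_nhds z₀ hεpos) ?_ (Hc_integrable η hη z₀ hz₀re) ?_ ?_ ?_ ?_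
  · exact key.2.differentiableAt.differentiableWithinAt
  · -- a.e. strong measurability for z near z₀
    have hopen : {z : ℂ | 0 < z.re} ∈ nhds z₀ :=
      (isOpen_lt continuous_const Complex.continuous_re).mem_nhds hz₀
    filter_upwards [hopen] with z hz
    exact (Hc_contOn η z hz).aestronglyMeasurable measurableSet_Ioi
  · exact (Hc'_contOn η z₀ hz₀re).aestronglyMeasurable measurableSet_Ioi
  · refine (ae_restrict_iff' measurableSet_Ioi).2 (Filter.Eventually.of_forall fun t ht => ?_)
    intro z hzb
    obtain ⟨h1, h2⟩ := hball z hzb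
    exact norm_Hc'_le η hη z h2 hεpos h1 (Set.mem_Ioi.1 ht).le
  · exact ((exp_neg_integrableOn_Ioi 0 hη)).const_mul _
  · refine (ae_restrict_iff' measurableSet_Ioi).2 (Filter.Eventually.of_forall fun t ht => ?_)
    intro z hzb
    exact hasDerivAt_Hc η z (hball z hzb).2 (Set.mem_Ioi.1 ht).le

lemma Gc_analytic (η : ℝ) (hη : 0 < η) :
    AnalyticOnNhd ℂ (Gc η) {z : ℂ | 0 < z.re} :=
  (Gc_differentiableOn η hη).analyticOnNhd (isOpen_lt continuous_const Complex.continuous_re)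

lemma Gc_real (η : ℝ) (hη : 0 < η) {x : ℝ} (hx : 0 < x) :
    Gc η ↑x = ((∫ u in Set.Ioi x, hr η u : ℝ) : ℂ) := by
  have h1 : ∀ t ∈ Set.Ioi (0:ℝ), Hc η ↑x t = ((hr η (x+t) : ℝ) : ℂ) := by
    intro t ht
    have ht0 : (0:ℝ) < t := Set.mem_Ioi.1 ht
    have hxt : (0:ℝ) ≤ x + t := by linarith
    rw [Hc, hr]
    have e1 : ((x:ℂ) + (t:ℂ)) = ((x + t : ℝ) : ℂ) := by push_cast; ring
    have e2 : (-(↑η*((x:ℂ)+↑t))) = ((-(η*(x+t)) : ℝ) : ℂ) := by push_cast; ring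
    rw [e1, show (-(↑η * ((x+t:ℝ):ℂ))) = ((-(η*(x+t)) : ℝ) : ℂ) by push_cast; ring,
      ← Complex.ofReal_exp]
    rw [show ((-(1/2):ℂ)) = ((-(1/2):ℝ):ℂ) by norm_num]
    rw [← Complex.ofReal_cpow hxt]
    push_cast
    ring
  have h2 : Gc η ↑x = ∫ t in Set.Ioi (0:ℝ), ((hr η (x+t) : ℝ) : ℂ) := by
    exact setIntegral_congr_fun measurableSet_Ioi h1
  rw [h2]
  have hshift : ∫ t in Set.Ioi (0:ℝ), hr η (x+t) = ∫ u in Set.Ioi x, hr η u := by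
    have hmp : MeasurePreserving (fun t : ℝ => x + t) volume volume :=
      measurePreserving_add_left volume x
    have hme : MeasurableEmbedding (fun t : ℝ => x + t) :=
      (Homeomorph.addLeft x).measurableEmbedding
    have := hmp.setIntegral_preimage_emb hme (hr η) (Set.Ioi x)
    have hpre : (fun t : ℝ => x + t) ⁻¹' (Set.Ioi x) = Set.Ioi 0 := by
      ext t; simp [Set.mem_Ioi]
    rw [hpre] at this
    exact this
  rw [← hshift]
  exact integral_ofReal (𝕜 := ℂ)

lemma iteratedDerivWithin_eq_iteratedDeriv_of_isOpen {f : ℝ → ℝ} {s : Set ℝ}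
    (hs : IsOpen s) {x : ℝ} (hx : x ∈ s) (n : ℕ) :
    iteratedDerivWithin n f s x = iteratedDeriv n f x := by
  unfold iteratedDerivWithin iteratedDeriv
  rw [iteratedFDerivWithin_of_isOpen n hs hx]

end CMQAux

/-- For every η > 0, ρ ↦ Q(√(2ρη)) is completely monotone on (0,∞). -/
theorem cm_Q_sqrt (η : ℝ) (hη : 0 < η) :
    CompletelyMonotoneOn (fun ρ : ℝ => gaussQ (Real.sqrt (2 * ρ * η))) := by
  set G : ℝ → ℝ := fun ρ : ℝ => gaussQ (Real.sqrt (2 * ρ * η)) with hGdef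
  have hG0 : ∀ x ∈ Set.Ioi (0:ℝ), G x = ∫ u in Set.Ioi x, hfun η u := fun x hx =>
    gaussQ_eq_integral_hfun η hη x (Set.mem_Ioi.1 hx)
  have hGderiv : ∀ x ∈ Set.Ioi (0:ℝ), HasDerivAt G (-(hfun η x)) x := by
    intro x hx
    refine (hasDerivAt_integral_hfun η hη (Set.mem_Ioi.1 hx)).congr_of_eventuallyEq ?_
    filter_upwards [isOpen_Ioi.mem_nhds hx] with y hy using hG0 y hy
  have hGderiv' : ∀ x ∈ Set.Ioi (0:ℝ), deriv G x = -(hfun η x) := fun x hx =>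
    (hGderiv x hx).deriv
  constructor
  · -- smoothness (analyticity)
    have hmodel : AnalyticOnNhd ℝ
        (fun x : ℝ => (η / Real.sqrt (2*η) / Real.sqrt (2*Real.pi)) * (Gc η ↑x).re)
        (Set.Ioi 0) := by
      have hA : AnalyticOnNhd ℝ (Gc η) {z : ℂ | 0 < z.re} :=
        (Gc_analytic η hη).restrictScalars
      have hof : AnalyticOnNhd ℝ (fun x : ℝ => (x:ℂ)) (Set.Ioi 0) := fun x _ =>
        Complex.ofRealCLM.analyticAt x
      have hcomp : AnalyticOnNhd ℝ (fun x : ℝ => Gc η ↑x) (Set.Ioi 0) :=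
        hA.comp hof fun x hx => by simpa using (Set.mem_Ioi.1 hx)
      have hre : AnalyticOnNhd ℝ (fun z : ℂ => z.re) Set.univ := fun z _ =>
        Complex.reCLM.analyticAt z
      exact analyticOnNhd_const.mul
        (hre.comp hcomp fun x _ => Set.mem_univ _)
    have hEq : ∀ x ∈ Set.Ioi (0:ℝ),
        G x = (η / Real.sqrt (2*η) / Real.sqrt (2*Real.pi)) * (Gc η ↑x).re := by
      intro x hx
      have hx0 : (0:ℝ) < x := Set.mem_Ioi.1 hx
      rw [hG0 x hx, Gc_real η hη hx0, Complex.ofReal_re]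
      rw [show (fun u => hfun η u)
          = fun u => (η / Real.sqrt (2*η) / Real.sqrt (2*Real.pi)) * hr η u from rfl]
      exact integral_const_mul _ _
    exact (hmodel.contDiffOn isOpen_Ioi.uniqueDiffOn).congr hEq
  · intro n x hx
    have hx0 : (0:ℝ) < x := Set.mem_Ioi.1 hx
    rw [iteratedDerivWithin_eq_iteratedDeriv_of_isOpen isOpen_Ioi hx n]
    match n with
    | 0 =>
      simp only [pow_zero, one_mul, iteratedDeriv_zero]
      rw [hG0 x hx]
      exact integral_hfun_nonneg η hη hx0
    | (n+1) =>
      obtain ⟨m, c, hc0, hcv, hder⟩ := key_induction η hη G hGderiv' n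
      rw [iteratedDeriv_eq_iterate, hder x hx]
      rw [← mul_assoc, ← mul_pow]
      norm_num
      exact mul_nonneg (Real.exp_pos _).le (Finset.sum_nonneg fun k _ =>
        mul_nonneg (hc0 k) (Real.rpow_nonneg hx0.le _))
end

section
/- If g is completely monotone of order α (i.e., x ↦ x^α g(x) is completely monotone on (0,∞)) for some natural number α, then g is completely monotone of every order β with 0 ≤ β ≤ α; in particular g itself is completely monotone. -/
open MeasureTheory Set Real

lemma idw_eq (f : ℝ → ℝ) (n : ℕ) {x : ℝ} (hx : x ∈ Set.Ioi (0:ℝ)) :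
    iteratedDerivWithin n f (Set.Ioi 0) x = iteratedDeriv n f x := by
  rw [iteratedDerivWithin_eq_iteratedFDerivWithin, iteratedDeriv_eq_iteratedFDeriv,
    iteratedFDerivWithin_of_isOpen (𝕜 := ℝ) n isOpen_Ioi hx]

lemma cm_iff (f : ℝ → ℝ) :
    CompletelyMonotoneOn f ↔ (ContDiffOn ℝ (⊤ : ℕ∞) f (Set.Ioi 0) ∧
      ∀ n : ℕ, ∀ x ∈ Set.Ioi (0:ℝ), 0 ≤ (-1:ℝ)^n * iteratedDeriv n f x) := by
  unfold CompletelyMonotoneOn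
  refine and_congr Iff.rfl ⟨fun h n x hx => ?_, fun h n x hx => ?_⟩
  · rw [← idw_eq f n hx]; exact h n x hx
  · rw [idw_eq f n hx]; exact h n x hx

lemma contDiffOn_iteratedDeriv {h : ℝ → ℝ} (hh : ContDiffOn ℝ (⊤ : ℕ∞) h (Set.Ioi 0)) (n : ℕ) :
    ContDiffOn ℝ (⊤ : ℕ∞) (iteratedDeriv n h) (Set.Ioi 0) := by
  induction n with
  | zero => simpa using hh
  | succ n ih => rw [iteratedDeriv_succ]; exact ih.deriv_of_isOpen isOpen_Ioi (by simp)

lemma iteratedDeriv_id_mul {h : ℝ → ℝ} (hh : ContDiffOn ℝ (⊤ : ℕ∞) h (Set.Ioi 0)) (n : ℕ) :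
    ∀ x ∈ Set.Ioi (0:ℝ), iteratedDeriv n (fun y => y * h y) x
      = x * iteratedDeriv n h x + n * iteratedDeriv (n-1) h x := by
  have hdiff : ∀ k : ℕ, ∀ y ∈ Set.Ioi (0:ℝ), DifferentiableAt ℝ (iteratedDeriv k h) y :=
    fun k y hy =>
      ((contDiffOn_iteratedDeriv hh k).contDiffAt (isOpen_Ioi.mem_nhds hy)).differentiableAt (by simp)
  induction n with
  | zero => intro x hx; simp
  | succ n ih =>
    intro x hx
    have heq : (fun y => iteratedDeriv n (fun z => z * h z) y) =ᶠ[nhds x]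
        fun y => y * iteratedDeriv n h y + n * iteratedDeriv (n-1) h y := by
      filter_upwards [isOpen_Ioi.mem_nhds hx] with y hy using ih y hy
    rw [iteratedDeriv_succ, heq.deriv_eq]
    have d1 : HasDerivAt (fun y => y * iteratedDeriv n h y)
        (1 * iteratedDeriv n h x + x * deriv (iteratedDeriv n h) x) x :=
      (hasDerivAt_id x).mul ((hdiff n x hx).hasDerivAt)
    have d2 : HasDerivAt (fun y => (n:ℝ) * iteratedDeriv (n-1) h y)
        ((n:ℝ) * iteratedDeriv n h x) x := by
      rcases Nat.eq_zero_or_pos n with hn | hn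
      · subst hn; simpa using hasDerivAt_const x (0:ℝ)
      · have := ((hdiff (n-1) x hx).hasDerivAt).const_mul (n:ℝ)
        rw [← iteratedDeriv_succ, Nat.sub_add_cancel hn] at this
        exact this
    have : deriv (fun y => y * iteratedDeriv n h y + (n:ℝ) * iteratedDeriv (n-1) h y) x = _ := (d1.add d2).deriv
    rw [this, ← iteratedDeriv_succ]
    simp only [Nat.add_sub_cancel]
    push_cast
    ring

lemma cm_div_x {f : ℝ → ℝ} (hf : CompletelyMonotoneOn f) :
    CompletelyMonotoneOn (fun x => x⁻¹ * f x) := by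
  obtain ⟨hs, hm⟩ := (cm_iff f).1 hf
  set h : ℝ → ℝ := fun x => x⁻¹ * f x with hh
  have hsm : ContDiffOn ℝ (⊤ : ℕ∞) h (Set.Ioi 0) :=
    (contDiffOn_id.inv (fun x hx => ne_of_gt hx)).mul hs
  have key : ∀ n : ℕ, ∀ x ∈ Set.Ioi (0:ℝ),
      iteratedDeriv n f x = x * iteratedDeriv n h x + n * iteratedDeriv (n-1) h x := by
    intro n x hx
    have heq : Set.EqOn f (fun y => y * h y) (Set.Ioi 0) := by
      intro y hy
      have : y ≠ 0 := ne_of_gt hy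
      simp [hh]
      field_simp
    rw [heq.iteratedDeriv_of_isOpen isOpen_Ioi n hx]
    exact iteratedDeriv_id_mul hsm n x hx
  refine (cm_iff h).2 ⟨hsm, ?_⟩
  intro n
  induction n with
  | zero =>
    intro x hx
    have h0 := hm 0 x hx
    simp only [pow_zero, one_mul, iteratedDeriv_zero] at h0 ⊢
    exact mul_nonneg (inv_nonneg.2 (le_of_lt hx)) h0
  | succ n ih =>
    intro x hx
    have hx' : (0:ℝ) < x := hx
    have hid := key (n+1) x hx
    simp only [Nat.add_sub_cancel] at hid
    have hB := hm (n+1) x hx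
    have hC := ih x hx
    have h1 : x * ((-1:ℝ)^(n+1) * iteratedDeriv (n+1) h x)
        = (-1:ℝ)^(n+1) * iteratedDeriv (n+1) f x
          + ((n:ℝ)+1) * ((-1:ℝ)^n * iteratedDeriv n h x) := by
      rw [hid]; rw [pow_succ]; push_cast; ring
    have h2 : 0 ≤ x * ((-1:ℝ)^(n+1) * iteratedDeriv (n+1) h x) := by
      rw [h1]
      have : (0:ℝ) ≤ (n:ℝ)+1 := by positivity
      exact add_nonneg hB (mul_nonneg this hC)
    nlinarith [h2, hx']

lemma cm_congr {f g : ℝ → ℝ} (h : Set.EqOn f g (Set.Ioi 0)) (hf : CompletelyMonotoneOn f) :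
    CompletelyMonotoneOn g := by
  obtain ⟨h1, h2⟩ := (cm_iff f).1 hf
  refine (cm_iff g).2 ⟨h1.congr (fun x hx => (h hx).symm), fun n x hx => ?_⟩
  rw [← h.iteratedDeriv_of_isOpen isOpen_Ioi n hx]
  exact h2 n x hx

/-- If g is completely monotone of order α (i.e. x^α g(x) is c.m.), then g is
completely monotone of every order β ≤ α; in particular g itself is c.m. -/
theorem cm_of_order_mono (g : ℝ → ℝ) (α : ℕ)
    (hα : CompletelyMonotoneOn (fun x => x ^ α * g x)) :
    ∀ β : ℕ, β ≤ α → CompletelyMonotoneOn (fun x => x ^ β * g x) := by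
  intro β hβ
  obtain ⟨d, rfl⟩ : ∃ d, α = β + d := ⟨α - β, (Nat.add_sub_cancel' hβ).symm⟩
  clear hβ
  induction d with
  | zero => simpa using hα
  | succ d ih =>
    apply ih
    have hstep := cm_div_x hα
    apply cm_congr ?_ hstep
    intro x hx
    have hx' : x ≠ 0 := ne_of_gt hx
    simp only
    rw [pow_add, pow_add, pow_succ]
    field_simp
    ring
end

section
/- Let g(x) = ∫₀^∞ exp(-ux) μ(u) du with μ nonnegative, measurable, and nondecreasing on [0,∞), and the integral finite for all x > 0. Then x·g(x) is completely monotone on (0,∞), i.e., g is completely monotone of order 1. -/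
open MeasureTheory Set Real

section Aux
open Filter

lemma aux_int_pow_exp (n : ℕ) {b : ℝ} (hb : 0 < b) :
    IntegrableOn (fun u : ℝ => u ^ n * Real.exp (-u * b)) (Ioi 0) := by
  have := integrableOn_rpow_mul_exp_neg_mul_rpow (p := 1) (s := n) (b := b)
    (lt_of_lt_of_le neg_one_lt_zero (Nat.cast_nonneg n)) zero_lt_one hb
  refine this.congr_fun (fun x hx => ?_) measurableSet_Ioi
  beta_reduce
  rw [Real.rpow_natCast, Real.rpow_one, neg_mul, neg_mul, mul_comm b x]

lemma aux_tendsto_pow_exp (n : ℕ) {b : ℝ} (hb : 0 < b) :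
    Tendsto (fun u : ℝ => u ^ n * Real.exp (-u * b)) atTop (nhds 0) := by
  have h1 : Tendsto (fun u : ℝ => b * u) atTop atTop :=
    Filter.tendsto_atTop_atTop_of_monotone' (fun x y hxy => by nlinarith) (by
      simp only [not_bddAbove_iff]
      intro c
      exact ⟨c+b, Set.mem_range.2 ⟨(c+b)/b, by field_simp⟩, by linarith⟩)
  have h2 := (tendsto_pow_mul_exp_neg_atTop_nhds_zero n).comp h1
  have h3 : Tendsto (fun u : ℝ => (1/b^n) * ((b*u) ^ n * Real.exp (-(b*u)))) atTop (nhds 0) := by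
    simpa using h2.const_mul (1/b^n)
  refine h3.congr (fun u => ?_)
  have : -(b*u) = -u*b := by ring
  rw [this]
  field_simp [mul_pow]
  ring

lemma aux_pow_le_exp {t : ℝ} (ht : 0 ≤ t) (n : ℕ) : t ^ n ≤ n.factorial * Real.exp t := by
  have h := Real.sum_le_exp_of_nonneg ht (n+1)
  have h2 : t ^ n / n.factorial ≤ Real.exp t := by
    refine le_trans ?_ h
    refine Finset.single_le_sum (f := fun i => t ^ i / i.factorial) (fun i _ => by positivity)
      (Finset.self_mem_range_succ n)
  have hf : (0:ℝ) < n.factorial := by positivity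
  calc t ^ n = n.factorial * (t ^ n / n.factorial) := by field_simp
    _ ≤ n.factorial * Real.exp t := by nlinarith

lemma aux_ptwise {u y b : ℝ} (hu : 0 ≤ u) (hb : 0 < b) (hy : b ≤ y) (n : ℕ) :
    u ^ n * Real.exp (-u * y) ≤ n.factorial * (2/b)^n * Real.exp (-u*(b/2)) := by
  have h1 : (u * (b/2)) ^ n ≤ n.factorial * Real.exp (u*(b/2)) :=
    aux_pow_le_exp (by positivity) n
  have h2 : Real.exp (-u * y) ≤ Real.exp (-u * b) :=
    Real.exp_le_exp.2 (by nlinarith)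
  have h3 : u ^ n ≤ n.factorial * (2/b)^n * Real.exp (u*(b/2)) := by
    have : u ^ n = (u*(b/2))^n * (2/b)^n := by
      rw [← mul_pow]; field_simp
    rw [this]
    calc (u*(b/2))^n * (2/b)^n ≤ (n.factorial * Real.exp (u*(b/2))) * (2/b)^n := by
          apply mul_le_mul_of_nonneg_right h1 (by positivity)
      _ = n.factorial * (2/b)^n * Real.exp (u*(b/2)) := by ring
  have hexp : Real.exp (u*(b/2)) * Real.exp (-u*b) = Real.exp (-u*(b/2)) := by
    rw [← Real.exp_add]; ring_nf
  calc u ^ n * Real.exp (-u * y) ≤ u ^ n * Real.exp (-u * b) :=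
        mul_le_mul_of_nonneg_left h2 (by positivity)
    _ ≤ (n.factorial * (2/b)^n * Real.exp (u*(b/2))) * Real.exp (-u*b) :=
        mul_le_mul_of_nonneg_right h3 (Real.exp_nonneg _)
    _ = n.factorial * (2/b)^n * Real.exp (-u*(b/2)) := by rw [mul_assoc, hexp]

lemma aux_h_deriv (n : ℕ) (x : ℝ) (u : ℝ) :
    HasDerivAt (fun u : ℝ => -(u ^ (n+1) * Real.exp (-u * x)))
      ((x * u ^ (n+1) - (n+1) * u ^ n) * Real.exp (-u * x)) u := by
  have he : HasDerivAt (fun u : ℝ => Real.exp (-u * x)) (-x * Real.exp (-u * x)) u := by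
    simpa [mul_comm] using ((hasDerivAt_id u).const_mul (-x)).exp
  have hp : HasDerivAt (fun u : ℝ => u ^ (n+1)) ((n+1) * u ^ n) u := by
    simpa using hasDerivAt_pow (n+1) u
  have := (hp.mul he).neg
  refine this.congr_deriv ?_
  ring

lemma aux_int_h (n : ℕ) {x : ℝ} (hx : 0 < x) :
    IntegrableOn (fun u : ℝ => (x * u ^ (n+1) - (n+1) * u ^ n) * Real.exp (-u * x)) (Ioi 0) := by
  have h1 := (aux_int_pow_exp (n+1) hx).const_mul x
  have h2 := (aux_int_pow_exp n hx).const_mul ((n+1 : ℝ))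
  refine (h1.sub h2).congr (Filter.Eventually.of_forall fun u => ?_)
  simp only [Pi.sub_apply]
  ring

lemma aux_zero_integral (n : ℕ) {x : ℝ} (hx : 0 < x) :
    ∫ u in Ioi (0:ℝ), (x * u ^ (n+1) - (n+1) * u ^ n) * Real.exp (-u * x) = 0 := by
  have := integral_Ioi_of_hasDerivAt_of_tendsto
    (f := fun u : ℝ => -(u ^ (n+1) * Real.exp (-u * x)))
    (f' := fun u : ℝ => (x * u ^ (n+1) - (n+1) * u ^ n) * Real.exp (-u * x))
    (a := 0) (m := 0)
    (by
      apply Continuous.continuousWithinAt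
      continuity)
    (fun u _ => aux_h_deriv n x u)
    (aux_int_h n hx)
    (by simpa using (aux_tendsto_pow_exp (n+1) hx).neg)
  simpa using this

section withMu
variable (μ : ℝ → ℝ)
    (hμ_meas : Measurable μ) (hμ_nonneg : ∀ u, 0 ≤ u → 0 ≤ μ u)
    (hμ_mono : MonotoneOn μ (Set.Ici 0))
    (hint : ∀ x : ℝ, 0 < x →
      Integrable (fun u => Real.exp (-u * x) * μ u) (volume.restrict (Set.Ioi 0)))

include hμ_meas hμ_nonneg hint in
lemma aux_int_mu (n : ℕ) {x : ℝ} (hx : 0 < x) :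
    IntegrableOn (fun u : ℝ => u ^ n * Real.exp (-u * x) * μ u) (Ioi 0) := by
  have hbig := ((hint (x/2) (by linarith)).const_mul (n.factorial * (2/x)^n))
  refine Integrable.mono hbig ?_ ?_
  · exact ((measurable_id.pow_const n).mul
      ((measurable_id.neg.mul_const x).exp)).mul hμ_meas |>.aestronglyMeasurable
  · filter_upwards [ae_restrict_mem measurableSet_Ioi] with u hu
    have hu' : (0:ℝ) ≤ u := (le_of_lt hu)
    have hμu := hμ_nonneg u hu'
    have hb := aux_ptwise hu' hx le_rfl n
    rw [Real.norm_eq_abs, Real.norm_eq_abs]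
    rw [abs_of_nonneg (by positivity), abs_of_nonneg (by positivity)]
    have : u ^ n * Real.exp (-u * x) * μ u ≤
        (n.factorial * (2/x)^n * Real.exp (-u*(x/2))) * μ u :=
      mul_le_mul_of_nonneg_right hb hμu
    calc u ^ n * Real.exp (-u * x) * μ u
        ≤ (n.factorial * (2/x)^n * Real.exp (-u*(x/2))) * μ u := this
      _ = n.factorial * (2/x)^n * (Real.exp (-u * (x/2)) * μ u) := by ring

include hμ_meas hμ_nonneg hint in
lemma aux_hasDeriv (n : ℕ) {x : ℝ} (hx : 0 < x) :
    HasDerivAt (fun y => ∫ u in Ioi (0:ℝ), u ^ n * Real.exp (-u * y) * μ u)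
      (-∫ u in Ioi (0:ℝ), u ^ (n+1) * Real.exp (-u * x) * μ u) x := by
  have key := hasDerivAt_integral_of_dominated_loc_of_deriv_le
    (F := fun y u => u ^ n * Real.exp (-u * y) * μ u)
    (F' := fun y u => -(u ^ (n+1) * Real.exp (-u * y) * μ u))
    (x₀ := x) (s := Metric.ball x (x/2))
    (bound := fun u => (n+1).factorial * (2/(x/2))^(n+1) * (Real.exp (-u * (x/2/2)) * μ u))
    (Metric.ball_mem_nhds _ (by linarith))
    ?_ (aux_int_mu μ hμ_meas hμ_nonneg hint n hx) ?_ ?_ ?_ ?_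
  · have := key.2
    rw [integral_neg] at this
    exact this
  · filter_upwards with y
    exact (((measurable_id.pow_const n).mul
      ((measurable_id.neg.mul_const y).exp)).mul hμ_meas).aestronglyMeasurable
  · exact ((((measurable_id.pow_const (n+1)).mul
      ((measurable_id.neg.mul_const x).exp)).mul hμ_meas).neg).aestronglyMeasurable
  · filter_upwards [ae_restrict_mem measurableSet_Ioi] with u hu y hy
    have hu' : (0:ℝ) ≤ u := le_of_lt hu
    have hμu := hμ_nonneg u hu'
    rw [Metric.mem_ball, Real.dist_eq, abs_lt] at hy
    have hyx : x/2 ≤ y := by linarith [hy.1]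
    have hb := aux_ptwise hu' (show (0:ℝ) < x/2 by linarith) hyx (n+1)
    rw [norm_neg, Real.norm_eq_abs, abs_of_nonneg (by positivity)]
    calc u ^ (n+1) * Real.exp (-u * y) * μ u
        ≤ ((n+1).factorial * (2/(x/2))^(n+1) * Real.exp (-u*(x/2/2))) * μ u :=
          mul_le_mul_of_nonneg_right hb hμu
      _ = (n+1).factorial * (2/(x/2))^(n+1) * (Real.exp (-u * (x/2/2)) * μ u) := by ring
  · exact ((hint (x/2/2) (by linarith)).const_mul _)
  · filter_upwards [ae_restrict_mem measurableSet_Ioi] with u hu y hy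
    have : HasDerivAt (fun y : ℝ => Real.exp (-u * y)) (-u * Real.exp (-u * y)) y := by
      simpa [mul_comm] using ((hasDerivAt_id y).const_mul (-u)).exp
    have h2 := (this.const_mul (u ^ n)).mul_const (μ u)
    refine h2.congr_deriv ?_
    ring

include hμ_meas hμ_nonneg hμ_mono hint in
lemma aux_sign (n : ℕ) {x : ℝ} (hx : 0 < x) :
    0 ≤ ∫ u in Ioi (0:ℝ), (x * u ^ (n+1) - (n+1) * u ^ n) * Real.exp (-u * x) * μ u := by
  set c : ℝ := (n+1)/x with hc
  have hc0 : 0 ≤ c := by positivity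
  have hint1 : IntegrableOn
      (fun u : ℝ => (x * u ^ (n+1) - (n+1) * u ^ n) * Real.exp (-u * x) * μ c) (Ioi 0) :=
    (aux_int_h n hx).mul_const _
  have hint2 : IntegrableOn
      (fun u : ℝ => (x * u ^ (n+1) - (n+1) * u ^ n) * Real.exp (-u * x) * μ u) (Ioi 0) := by
    have h1 := (aux_int_mu μ hμ_meas hμ_nonneg hint (n+1) hx).const_mul x
    have h2 := (aux_int_mu μ hμ_meas hμ_nonneg hint n hx).const_mul ((n+1:ℝ))
    refine (h1.sub h2).congr (Filter.Eventually.of_forall fun u => ?_)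
    simp only [Pi.sub_apply]
    ring
  have hmono : ∀ u ∈ Ioi (0:ℝ),
      (x * u ^ (n+1) - (n+1) * u ^ n) * Real.exp (-u * x) * μ c ≤
      (x * u ^ (n+1) - (n+1) * u ^ n) * Real.exp (-u * x) * μ u := by
    intro u hu
    have hu0 : (0:ℝ) < u := hu
    have hfac : x * u ^ (n+1) - (n+1) * u ^ n = u ^ n * (x * u - (n+1)) := by ring
    rcases le_total c u with hcu | huc
    · have hμle : μ c ≤ μ u := hμ_mono hc0 (le_of_lt hu0) hcu
      have hh : 0 ≤ (x * u ^ (n+1) - (n+1) * u ^ n) * Real.exp (-u * x) := by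
        rw [hfac]
        have : 0 ≤ x * u - (n+1) := by
          have : (n+1:ℝ) = x * c := by rw [hc]; field_simp
          nlinarith
        positivity
      exact mul_le_mul_of_nonneg_left hμle hh
    · have hμle : μ u ≤ μ c := hμ_mono (le_of_lt hu0) hc0 huc
      have hh : (x * u ^ (n+1) - (n+1) * u ^ n) * Real.exp (-u * x) ≤ 0 := by
        rw [hfac]
        have h1 : x * u - (n+1) ≤ 0 := by
          have : (n+1:ℝ) = x * c := by rw [hc]; field_simp
          nlinarith
        have h2 : (0:ℝ) ≤ u ^ n := by positivity
        have h3 : (0:ℝ) ≤ Real.exp (-u*x) := Real.exp_nonneg _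
        nlinarith [mul_nonneg (mul_nonneg h2 h3) (neg_nonneg.2 h1)]
      exact mul_le_mul_of_nonpos_left hμle hh
  have hle := setIntegral_mono_on hint1 hint2 measurableSet_Ioi hmono
  have heq : ∫ u in Ioi (0:ℝ), (x * u ^ (n+1) - (n+1) * u ^ n) * Real.exp (-u * x) * μ c
      = (∫ u in Ioi (0:ℝ), (x * u ^ (n+1) - (n+1) * u ^ n) * Real.exp (-u * x)) * μ c := by
    rw [integral_mul_const]
  rw [heq, aux_zero_integral n hx, zero_mul] at hle
  exact hle

include hμ_meas hμ_nonneg hint in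
set_option linter.unusedSectionVars false in
lemma aux_cint {z : ℂ} (hz : 0 < z.re) :
    Integrable (fun u : ℝ => Complex.exp (-u * z) * (μ u : ℂ)) (volume.restrict (Ioi 0)) := by
  refine Integrable.mono (hint z.re hz) ?_ ?_
  · apply Measurable.aestronglyMeasurable
    fun_prop
  · filter_upwards [ae_restrict_mem measurableSet_Ioi] with u hu
    have hu' : (0:ℝ) ≤ u := le_of_lt hu
    have : ‖Complex.exp (-(u:ℂ) * z) * (μ u : ℂ)‖ = Real.exp (-u * z.re) * |μ u| := by
      rw [norm_mul, Complex.norm_exp, Complex.norm_real, Real.norm_eq_abs]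
      congr 2
      simp [Complex.mul_re]
    rw [this, Real.norm_eq_abs, abs_mul, abs_of_nonneg (Real.exp_nonneg _)]

include hμ_meas hμ_nonneg hint in
lemma aux_canalytic :
    AnalyticOnNhd ℂ (fun z => ∫ u in Ioi (0:ℝ), Complex.exp (-u * z) * (μ u : ℂ))
      {z : ℂ | 0 < z.re} := by
  have hopen : IsOpen {z : ℂ | 0 < z.re} := isOpen_lt continuous_const Complex.continuous_re
  refine DifferentiableOn.analyticOnNhd (fun z hz => ?_) hopen
  have hz : 0 < z.re := hz
  have key := hasDerivAt_integral_of_dominated_loc_of_deriv_le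
    (F := fun (w : ℂ) (u : ℝ) => Complex.exp (-u * w) * (μ u : ℂ))
    (F' := fun (w : ℂ) (u : ℝ) => (-u : ℂ) * Complex.exp (-u * w) * (μ u : ℂ))
    (x₀ := z) (s := Metric.ball z (z.re/2))
    (bound := fun u => Nat.factorial 1 * (2/(z.re/2))^1 * (Real.exp (-u * (z.re/2/2)) * μ u))
    (Metric.ball_mem_nhds _ (by linarith))
    (by
      filter_upwards with w
      apply Measurable.aestronglyMeasurable
      fun_prop)
    (aux_cint μ hμ_meas hμ_nonneg hint hz)
    (by
      apply Measurable.aestronglyMeasurable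
      fun_prop)
    (by
      filter_upwards [ae_restrict_mem measurableSet_Ioi] with u hu w hw
      have hu' : (0:ℝ) ≤ u := le_of_lt hu
      have hwre : z.re/2 ≤ w.re := by
        have := Complex.abs_re_le_norm (w - z)
        rw [Metric.mem_ball, Complex.dist_eq] at hw
        have : |w.re - z.re| ≤ ‖w - z‖ := by
          simpa using Complex.abs_re_le_norm (w - z)
        rw [abs_le] at this
        linarith [this.1, hw.le, (Complex.abs_re_le_norm (w-z))]
      have hnorm : ‖(-u : ℂ) * Complex.exp (-u * w) * (μ u : ℂ)‖
          = u * Real.exp (-u * w.re) * |μ u| := by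
        rw [norm_mul, norm_mul, Complex.norm_exp]
        simp only [Complex.norm_real, Real.norm_eq_abs]
        rw [show ((-u : ℂ)) = ((-u : ℝ) : ℂ) by push_cast; ring, Complex.norm_real]
        rw [Real.norm_eq_abs, abs_of_nonpos (by linarith), neg_neg, Complex.re_ofReal_mul]
      rw [hnorm, abs_of_nonneg (hμ_nonneg u hu')]
      have hb := aux_ptwise hu' (by linarith : (0:ℝ) < z.re/2) hwre 1
      rw [pow_one] at hb
      have := mul_le_mul_of_nonneg_right hb (hμ_nonneg u hu')
      calc u * Real.exp (-u * w.re) * μ u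
          = u ^ 1 * Real.exp (-u * w.re) * μ u := by rw [pow_one]
        _ ≤ Nat.factorial 1 * (2/(z.re/2))^1 * Real.exp (-u*(z.re/2/2)) * μ u := by
            rw [pow_one] at *
            exact mul_le_mul_of_nonneg_right (by simpa using hb) (hμ_nonneg u hu')
        _ = ↑(Nat.factorial 1) * (2/(z.re/2))^1 * (Real.exp (-u * (z.re/2/2)) * μ u) := by ring)
    ((hint (z.re/2/2) (by linarith)).const_mul _)
    (by
      filter_upwards [ae_restrict_mem measurableSet_Ioi] with u hu w hw
      have h1 : HasDerivAt (fun w : ℂ => Complex.exp (-u * w)) ((-u) * Complex.exp (-u * w)) w := by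
        simpa [mul_comm] using ((hasDerivAt_id w).const_mul (-u : ℂ)).cexp
      exact h1.mul_const (μ u : ℂ))
  exact key.2.differentiableAt.differentiableWithinAt

end withMu
end Aux

/-- If g is the Laplace transform of a nonnegative, measurable, nondecreasing
function μ on [0,∞), then x·g(x) is completely monotone on (0,∞). -/
theorem cm_order_one_of_monotone_rep (μ : ℝ → ℝ) (g : ℝ → ℝ)
    (hμ_meas : Measurable μ) (hμ_nonneg : ∀ u, 0 ≤ u → 0 ≤ μ u)
    (hμ_mono : MonotoneOn μ (Set.Ici 0))
    (hint : ∀ x : ℝ, 0 < x →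
      Integrable (fun u => Real.exp (-u * x) * μ u) (volume.restrict (Set.Ioi 0)))
    (hg : ∀ x : ℝ, 0 < x → g x = ∫ u in Set.Ioi (0 : ℝ), Real.exp (-u * x) * μ u) :
    CompletelyMonotoneOn (fun x => x * g x) := by
  -- the family of moment integrals
  set F : ℕ → ℝ → ℝ := fun n y => ∫ u in Ioi (0:ℝ), u ^ n * Real.exp (-u * y) * μ u with hF
  set P : ℕ → ℝ → ℝ := fun n y => y * F n y - n * F (n-1) y with hP
  have hgF : ∀ x ∈ Ioi (0:ℝ), x * g x = P 0 x := by
    intro x hx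
    have : g x = F 0 x := by
      rw [hg x hx, hF]
      simp only [pow_zero, one_mul]
    simp [hP, this]
  -- derivative recursion
  have hPd : ∀ n : ℕ, ∀ x ∈ Ioi (0:ℝ), HasDerivAt (P n) (-(P (n+1) x)) x := by
    intro n x hx
    have hx' : (0:ℝ) < x := hx
    have h1 := aux_hasDeriv μ hμ_meas hμ_nonneg hint n hx'
    have h0 := aux_hasDeriv μ hμ_meas hμ_nonneg hint (n-1) hx'
    have hmain := ((hasDerivAt_id x).mul h1).sub (h0.const_mul (n:ℝ))
    have : HasDerivAt (P n)
        ((1 * F n x + x * (-(F (n+1) x))) - (n:ℝ) * (-(F ((n-1)+1) x))) x := hmain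
    convert this using 1
    cases n with
    | zero => simp [hP]; ring
    | succ m =>
      simp only [hP, Nat.succ_sub_one]
      push_cast
      ring
  -- identify iterated derivatives
  have heq : ∀ n : ℕ, Set.EqOn (iteratedDerivWithin n (fun x => x * g x) (Ioi 0))
      (fun x => (-1:ℝ)^n * P n x) (Ioi 0) := by
    intro n
    induction n with
    | zero =>
      intro x hx
      simp only [iteratedDerivWithin_zero, pow_zero, one_mul]
      exact hgF x hx
    | succ m ih =>
      intro x hx
      rw [iteratedDerivWithin_succ]
      rw [derivWithin_congr ih (ih hx)]
      have hD : HasDerivAt (fun y => (-1:ℝ)^m * P m y) ((-1:ℝ)^m * (-(P (m+1) x))) x :=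
        (hPd m x hx).const_mul _
      rw [hD.hasDerivWithinAt.derivWithin ((uniqueDiffOn_Ioi 0) x hx)]
      ring
  constructor
  · -- smoothness (analyticity)
    have hopen : IsOpen {z : ℂ | 0 < z.re} := isOpen_lt continuous_const Complex.continuous_re
    have hG := aux_canalytic μ hμ_meas hμ_nonneg hint
    have hGr : AnalyticOnNhd ℝ
        (fun z => ∫ u in Ioi (0:ℝ), Complex.exp (-u * z) * (μ u : ℂ)) {z : ℂ | 0 < z.re} :=
      hG.restrictScalars
    have hof : AnalyticOnNhd ℝ (fun x : ℝ => (x : ℂ)) (Ioi 0) := by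
      intro x _
      exact Complex.ofRealCLM.analyticAt x
    have hre : AnalyticOnNhd ℝ (fun z : ℂ => z.re) Set.univ := by
      intro z _
      exact Complex.reCLM.analyticAt z
    have hmaps : Set.MapsTo (fun x : ℝ => (x : ℂ)) (Ioi 0) {z : ℂ | 0 < z.re} := by
      intro x hx
      simpa using (hx : (0:ℝ) < x)
    have hcomp : AnalyticOnNhd ℝ
        (fun x : ℝ => ((∫ u in Ioi (0:ℝ), Complex.exp (-u * (x:ℂ)) * (μ u : ℂ)).re)) (Ioi 0) :=
      (hre.comp (hGr.comp hof hmaps) (Set.mapsTo_univ _ _))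
    have hgeq : Set.EqOn
        (fun x : ℝ => ((∫ u in Ioi (0:ℝ), Complex.exp (-u * (x:ℂ)) * (μ u : ℂ)).re)) g (Ioi 0) := by
      intro x hx
      have : ∫ u in Ioi (0:ℝ), Complex.exp (-u * (x:ℂ)) * (μ u : ℂ)
          = ((∫ u in Ioi (0:ℝ), Real.exp (-u * x) * μ u : ℝ) : ℂ) := by
        have hcast : ∫ u in Ioi (0:ℝ), Complex.exp (-u * (x:ℂ)) * (μ u : ℂ)
            = ∫ u in Ioi (0:ℝ), ((Real.exp (-u * x) * μ u : ℝ) : ℂ) := by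
          refine setIntegral_congr_fun measurableSet_Ioi (fun u _ => ?_)
          rw [Complex.ofReal_mul, Complex.ofReal_exp]
          push_cast
          ring
        rw [hcast]
        exact integral_ofReal
      simp only [this, Complex.ofReal_re]
      exact (hg x hx).symm
    have hganal : AnalyticOnNhd ℝ g (Ioi 0) := by
      refine hcomp.congr isOpen_Ioi hgeq
    have hxg : AnalyticOnNhd ℝ (fun x : ℝ => x * g x) (Ioi 0) :=
      (analyticOnNhd_id).mul hganal
    exact ((contDiffOn_omega_iff_analyticOn (uniqueDiffOn_Ioi 0)).2 hxg.analyticOn).of_le le_top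
  · -- signs
    intro n x hx
    have hx' : (0:ℝ) < x := hx
    rw [heq n hx]
    have : (-1:ℝ)^n * ((-1:ℝ)^n * P n x) = P n x := by
      rw [← mul_assoc, ← mul_pow]
      simp
    rw [this]
    cases n with
    | zero =>
      simp only [hP, Nat.cast_zero, zero_mul, sub_zero]
      refine mul_nonneg (le_of_lt hx') ?_
      refine setIntegral_nonneg measurableSet_Ioi (fun u hu => ?_)
      have hu' : (0:ℝ) ≤ u := le_of_lt hu
      exact mul_nonneg (mul_nonneg (by positivity) (Real.exp_nonneg _)) (hμ_nonneg u hu')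
    | succ m =>
      have hintA := aux_int_mu μ hμ_meas hμ_nonneg hint (m+1) hx'
      have hintB := aux_int_mu μ hμ_meas hμ_nonneg hint m hx'
      have hPeq : P (m+1) x
          = ∫ u in Ioi (0:ℝ), (x * u ^ (m+1) - (m+1) * u ^ m) * Real.exp (-u * x) * μ u := by
        simp only [hP, Nat.succ_sub_one, hF]
        rw [← integral_const_mul, ← integral_const_mul, ← integral_sub
          (hintA.const_mul x) (hintB.const_mul _)]
        refine setIntegral_congr_fun measurableSet_Ioi (fun u _ => ?_)
        push_cast
        ring
      rw [hPeq]
      exact aux_sign μ hμ_meas hμ_nonneg hμ_mono hint m hx'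
end

section
/- Let P(ρ) = ρ^p ∫₀^∞ exp(-ρu) μ(u) du, where p ≥ 0, μ is nonnegative and measurable, μ(u) = 0 for u < d²/4 for some d > 0, and the integral is finite for all ρ > 0. Then P''(ρ) ≥ 0 for all ρ ≥ ρ₀ := 4(p + √p)/d². -/
/-!
With `L` the Laplace transform of `μ`, `P(ρ) = ρ^p L(ρ)`. Differentiating twice under the
integral sign gives `P''(ρ) = ∫ ρ^(p-2) ((ρu - p)² - p) e^(-ρu) μ(u) du`, and the weight
`(ρu - p)² - p` is nonnegative once `ρu ≥ p + √p`, which holds on the support `u ≥ d²/4` of `μ`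
when `ρ ≥ 4(p + √p)/d²`. The threshold is `0` only for `p = 0`; at `ρ = 0` the function `P'` is
monotone to the right of `0`, so its one-sided difference quotients there are nonnegative.
-/

open MeasureTheory Set Real Filter Topology
open scoped Nat

lemma pow_mul_exp_neg_mul_le (n : ℕ) {c u : ℝ} (hc : 0 < c) (hu : 0 ≤ u) :
    u ^ n * exp (-c * u) ≤ n ! / c ^ n := by
  have h := pow_div_factorial_le_exp _ (mul_nonneg hc.le hu) n
  rw [div_le_iff₀ (by positivity)] at h
  rw [le_div_iff₀ (by positivity)]
  calc u ^ n * exp (-c * u) * c ^ n = (c * u) ^ n / exp (c * u) := by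
        rw [neg_mul, exp_neg]; ring
    _ ≤ n ! := by rw [div_le_iff₀ (exp_pos _)]; linarith

lemma MonotoneOn.deriv_nonneg_of_accPt {g : ℝ → ℝ} {s : Set ℝ} {x : ℝ} (hg : MonotoneOn g s)
    (hx : AccPt x (𝓟 s)) : 0 ≤ deriv g x := by
  by_cases hd : DifferentiableAt ℝ g x
  · exact hd.hasDerivAt.hasDerivWithinAt.nonneg_of_monotoneOn hx hg
  · rw [deriv_zero_of_not_differentiableAt hd]

lemma iteratedDeriv_two_eq_of_hasDerivAt {f f' : ℝ → ℝ} {x f'' : ℝ}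
    (hf : ∀ᶠ y in 𝓝 x, HasDerivAt f (f' y) y) (hf' : HasDerivAt f' f'' x) :
    iteratedDeriv 2 f x = f'' := by
  have hderiv : deriv f =ᶠ[𝓝 x] f' := hf.mono fun y hy => hy.deriv
  rw [iteratedDeriv_succ, iteratedDeriv_one, hderiv.deriv_eq, hf'.deriv]

section LaplaceMoment

variable {ν : Measure ℝ} {g : ℝ → ℝ}

/-- `(-1)^n` times the `n`-th derivative of the Laplace transform of `g dν`. -/
noncomputable def laplaceMoment (ν : Measure ℝ) (g : ℝ → ℝ) (n : ℕ) (x : ℝ) : ℝ :=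
  ∫ u, u ^ n * exp (-x * u) * g u ∂ν

lemma integrable_pow_mul_exp_neg_mul (hν : ∀ᵐ u ∂ν, 0 ≤ u)
    (hint : ∀ x : ℝ, 0 < x → Integrable (fun u => exp (-x * u) * g u) ν) (n : ℕ) {c : ℝ}
    (hc : 0 < c) : Integrable (fun u => u ^ n * exp (-c * u) * g u) ν := by
  have hc2 : 0 < c / 2 := half_pos hc
  -- split `e^(-cu)` into two halves: one tames `u^n`, the other is integrable against `g`
  have h := (hint (c / 2) hc2).bdd_mul (f := fun u => u ^ n * exp (-(c / 2) * u))
    (by fun_prop) (hν.mono fun u hu => by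
      rw [norm_of_nonneg (by positivity)]
      exact pow_mul_exp_neg_mul_le n hc2 hu)
  refine h.congr (ae_of_all _ fun u => ?_)
  have hexp : exp (-c * u) = exp (-(c / 2) * u) * exp (-(c / 2) * u) := by
    rw [← exp_add]; ring_nf
  simp only [hexp]
  ring

lemma hasDerivAt_laplaceMoment (hν : ∀ᵐ u ∂ν, 0 ≤ u)
    (hint : ∀ x : ℝ, 0 < x → Integrable (fun u => exp (-x * u) * g u) ν) (n : ℕ) {x : ℝ}
    (hx : 0 < x) :
    HasDerivAt (laplaceMoment ν g n) (-laplaceMoment ν g (n + 1) x) x := by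
  have hbound : ∀ᵐ u ∂ν, ∀ y ∈ Ioi (x / 2),
      ‖-(u ^ (n + 1) * exp (-y * u) * g u)‖ ≤ ‖u ^ (n + 1) * exp (-(x / 2) * u) * g u‖ := by
    filter_upwards [hν] with u hu y hy
    rw [norm_neg, norm_mul, norm_mul (u ^ (n + 1) * exp (-(x / 2) * u))]
    gcongr
    rw [norm_mul, norm_mul, norm_of_nonneg (exp_pos _).le, norm_of_nonneg (exp_pos _).le]
    gcongr
    exact hy.le
  have hdiff : ∀ᵐ u ∂ν, ∀ y ∈ Ioi (x / 2), HasDerivAt (fun y => u ^ n * exp (-y * u) * g u)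
      (-(u ^ (n + 1) * exp (-y * u) * g u)) y := by
    refine ae_of_all _ fun u y _ => ?_
    have h := (((hasDerivAt_neg y).mul_const u).exp.const_mul (u ^ n)).mul_const (g u)
    exact h.congr_deriv (by ring)
  have key := hasDerivAt_integral_of_dominated_loc_of_deriv_le
    (Ioi_mem_nhds (half_lt_self hx))
    (eventually_of_mem (Ioi_mem_nhds hx) fun y hy =>
      (integrable_pow_mul_exp_neg_mul hν hint n hy).1)
    (integrable_pow_mul_exp_neg_mul hν hint n hx)
    (integrable_pow_mul_exp_neg_mul hν hint (n + 1) hx).neg.1 hbound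
    (integrable_pow_mul_exp_neg_mul hν hint (n + 1) (half_pos hx)).norm hdiff
  have h := key.2
  rw [integral_neg] at h
  exact h

lemma laplaceMoment_antitoneOn (hν : ∀ᵐ u ∂ν, 0 ≤ u)
    (hint : ∀ x : ℝ, 0 < x → Integrable (fun u => exp (-x * u) * g u) ν)
    (hg : ∀ᵐ u ∂ν, 0 ≤ g u) (n : ℕ) : AntitoneOn (laplaceMoment ν g n) (Ioi 0) := by
  intro x hx y hy hxy
  refine integral_mono_ae (integrable_pow_mul_exp_neg_mul hν hint n hy)
    (integrable_pow_mul_exp_neg_mul hν hint n hx) ?_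
  filter_upwards [hν, hg] with u hu hgu
  gcongr

lemma hasDerivAt_rpow_mul_laplaceMoment (hν : ∀ᵐ u ∂ν, 0 ≤ u)
    (hint : ∀ x : ℝ, 0 < x → Integrable (fun u => exp (-x * u) * g u) ν) (p : ℝ) (n : ℕ)
    {x : ℝ} (hx : 0 < x) :
    HasDerivAt (fun y => y ^ p * laplaceMoment ν g n y)
      (p * x ^ (p - 1) * laplaceMoment ν g n x - x ^ p * laplaceMoment ν g (n + 1) x) x := by
  exact ((hasDerivAt_rpow_const (Or.inl hx.ne')).mul
    (hasDerivAt_laplaceMoment hν hint n hx)).congr_deriv (by ring)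

lemma iteratedDeriv_two_rpow_mul_laplaceMoment (hν : ∀ᵐ u ∂ν, 0 ≤ u)
    (hint : ∀ x : ℝ, 0 < x → Integrable (fun u => exp (-x * u) * g u) ν) (p : ℝ) {x : ℝ}
    (hx : 0 < x) :
    iteratedDeriv 2 (fun y => y ^ p * laplaceMoment ν g 0 y) x =
      ∫ u, x ^ (p - 2) * ((x * u - p) ^ 2 - p) * (exp (-x * u) * g u) ∂ν := by
  set L := laplaceMoment ν g
  have hL' := ((hasDerivAt_rpow_mul_laplaceMoment hν hint (p - 1) 0 hx).const_mul p).sub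
    (hasDerivAt_rpow_mul_laplaceMoment hν hint p 1 hx)
  rw [iteratedDeriv_two_eq_of_hasDerivAt (f' := fun y => p * (y ^ (p - 1) * L 0 y) - y ^ p * L 1 y)
    (eventually_of_mem (Ioi_mem_nhds hx) fun y hy =>
      (hasDerivAt_rpow_mul_laplaceMoment hν hint p 0 hy).congr_deriv (by ring)) hL']
  have hpow_sub_one : x ^ (p - 1) = x ^ (p - 2) * x := by rw [← rpow_add_one hx.ne']; ring_nf
  have hpow : x ^ p = x ^ (p - 2) * x ^ 2 := by
    rw [← rpow_natCast, ← rpow_add hx]; ring_nf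
  have hi : ∀ k : ℕ, Integrable (fun u => u ^ k * exp (-x * u) * g u) ν :=
    fun k => integrable_pow_mul_exp_neg_mul hν hint k hx
  calc p * ((p - 1) * x ^ (p - 1 - 1) * L 0 x - x ^ (p - 1) * L 1 x)
        - (p * x ^ (p - 1) * L 1 x - x ^ p * L 2 x)
      = ∫ u, p * (p - 1) * x ^ (p - 2) * (u ^ 0 * exp (-x * u) * g u)
          - 2 * p * x ^ (p - 1) * (u ^ 1 * exp (-x * u) * g u)
          + x ^ p * (u ^ 2 * exp (-x * u) * g u) ∂ν := by
        rw [integral_add ?_ ((hi 2).const_mul _), integral_sub ((hi 0).const_mul _)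
          ((hi 1).const_mul _), integral_const_mul, integral_const_mul, integral_const_mul,
          show p - 1 - 1 = p - 2 by ring]
        · simp only [L, laplaceMoment]
          ring
        · exact ((hi 0).const_mul _).sub ((hi 1).const_mul _)
    _ = ∫ u, x ^ (p - 2) * ((x * u - p) ^ 2 - p) * (exp (-x * u) * g u) ∂ν := by
        congr 1; ext u; rw [hpow_sub_one, hpow]; ring

lemma iteratedDeriv_two_rpow_mul_laplaceMoment_nonneg (hν : ∀ᵐ u ∂ν, 0 ≤ u)
    (hint : ∀ x : ℝ, 0 < x → Integrable (fun u => exp (-x * u) * g u) ν)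
    (hg : ∀ᵐ u ∂ν, 0 ≤ g u) {a p x : ℝ} (hg_supp : ∀ᵐ u ∂ν, u < a → g u = 0) (hp : 0 ≤ p)
    (hx : 0 < x) (hxa : p + √p ≤ x * a) :
    0 ≤ iteratedDeriv 2 (fun y => y ^ p * laplaceMoment ν g 0 y) x := by
  rw [iteratedDeriv_two_rpow_mul_laplaceMoment hν hint p hx]
  refine integral_nonneg_of_ae ?_
  filter_upwards [hg, hg_supp] with u hgu hu_supp
  rcases lt_or_ge u a with hu_small | hu_large
  · simp [hu_supp hu_small]
  · have hxu : √p ≤ x * u - p := by nlinarith [sqrt_nonneg p]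
    have hweight : 0 ≤ (x * u - p) ^ 2 - p := by nlinarith [sq_sqrt hp, sqrt_nonneg p]
    positivity

lemma iteratedDeriv_two_nonneg_of_eqOn_laplaceMoment (hν : ∀ᵐ u ∂ν, 0 ≤ u)
    (hint : ∀ x : ℝ, 0 < x → Integrable (fun u => exp (-x * u) * g u) ν)
    (hg : ∀ᵐ u ∂ν, 0 ≤ g u) {P : ℝ → ℝ} (hP : EqOn P (laplaceMoment ν g 0) (Ioi 0)) :
    0 ≤ iteratedDeriv 2 P 0 := by
  have hderiv : EqOn (deriv P) (-laplaceMoment ν g 1) (Ioi 0) := fun x hx =>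
    ((hasDerivAt_laplaceMoment hν hint 0 hx).congr_of_eventuallyEq
      (eventually_of_mem (Ioi_mem_nhds hx) hP)).deriv
  have hmono : MonotoneOn (deriv P) (Ioi 0) := fun a ha b hb hab => by
    rw [hderiv ha, hderiv hb]
    exact neg_le_neg (laplaceMoment_antitoneOn hν hint hg 1 ha hb hab)
  rw [iteratedDeriv_succ, iteratedDeriv_one]
  exact hmono.deriv_nonneg_of_accPt (accPt_principal_iff_nhdsWithin.2 (by simpa using
    (inferInstance : (𝓝[>] (0 : ℝ)).NeBot)))

end LaplaceMoment

theorem second_deriv_nonneg_of_laplace_rep_general (p d : ℝ) (μ : ℝ → ℝ) (P : ℝ → ℝ)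
    (hp : 0 ≤ p) (hd : 0 < d)
    (hμ_nonneg : ∀ u, 0 ≤ μ u)
    (hμ_supp : ∀ u, u < d ^ 2 / 4 → μ u = 0)
    (hint : ∀ ρ : ℝ, 0 < ρ →
      Integrable (fun u => Real.exp (-ρ * u) * μ u) (volume.restrict (Set.Ioi 0)))
    (hP : ∀ ρ : ℝ, 0 < ρ → P ρ = ρ ^ p * ∫ u in Set.Ioi (0 : ℝ), Real.exp (-ρ * u) * μ u) :
    ∀ ρ : ℝ, 4 * (p + Real.sqrt p) / d ^ 2 ≤ ρ → 0 ≤ iteratedDeriv 2 P ρ := by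
  intro ρ hρ
  set ν := volume.restrict (Ioi (0 : ℝ))
  have hν : ∀ᵐ u ∂ν, 0 ≤ u := (ae_restrict_mem measurableSet_Ioi).mono fun u hu => le_of_lt hu
  have hPL : ∀ x, 0 < x → P x = x ^ p * laplaceMoment ν μ 0 x := fun x hx => by
    simp [hP x hx, laplaceMoment, ν]
  have hρd : 4 * (p + √p) ≤ ρ * d ^ 2 := (div_le_iff₀ (by positivity)).1 hρ
  rcases (show (0 : ℝ) ≤ 4 * (p + √p) / d ^ 2 by positivity).trans hρ |>.lt_or_eq with hρ0 | hρ0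
  · have hPeq : P =ᶠ[𝓝 ρ] fun x => x ^ p * laplaceMoment ν μ 0 x :=
      eventually_of_mem (Ioi_mem_nhds hρ0) hPL
    rw [hPeq.iteratedDeriv_eq]
    exact iteratedDeriv_two_rpow_mul_laplaceMoment_nonneg hν hint (ae_of_all _ hμ_nonneg)
      (ae_of_all _ hμ_supp) hp hρ0 (by linarith)
  · subst hρ0
    have hp0 : p = 0 := by nlinarith [sqrt_nonneg p]
    subst hp0
    exact iteratedDeriv_two_nonneg_of_eqOn_laplaceMoment hν hint (ae_of_all _ hμ_nonneg)
      fun x hx => by simpa using hPL x hx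

/-- If `P(ρ) = ρ^p ∫₀^∞ e^{-ρu} μ(u) du` with `p ≥ 0`, `μ` nonnegative measurable
vanishing below `d²/4`, and the integral finite for all `ρ > 0`, then
`P''(ρ) ≥ 0` whenever `ρ ≥ 4(p + √p)/d²`. -/
theorem second_deriv_nonneg_of_laplace_rep (p d : ℝ) (μ : ℝ → ℝ) (P : ℝ → ℝ)
    (hp : 0 ≤ p) (hd : 0 < d)
    (hμ_meas : Measurable μ) (hμ_nonneg : ∀ u, 0 ≤ μ u)
    (hμ_supp : ∀ u, u < d ^ 2 / 4 → μ u = 0)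
    (hint : ∀ ρ : ℝ, 0 < ρ →
      Integrable (fun u => Real.exp (-ρ * u) * μ u) (volume.restrict (Set.Ioi 0)))
    (hP : ∀ ρ : ℝ, 0 < ρ → P ρ = ρ ^ p * ∫ u in Set.Ioi (0 : ℝ), Real.exp (-ρ * u) * μ u) :
    ∀ ρ : ℝ, 4 * (p + Real.sqrt p) / d ^ 2 ≤ ρ → 0 ≤ iteratedDeriv 2 P ρ :=
  second_deriv_nonneg_of_laplace_rep_general p d μ P hp hd hμ_nonneg hμ_supp hint hP
end

section
/- Let X₁, X₂ be nonnegative random variables and p ≥ 0. If E[X₁^p exp(-ρX₁)] ≥ E[X₂^p exp(-ρX₂)] for all ρ > 0, then E[X₁^p f(X₁)] ≥ E[X₂^p f(X₂)] for every function f of the form f(x) = ∫₀^∞ exp(-ux) μ(u) du with μ nonnegative (i.e., every completely monotone f given by a nonnegative Laplace representation), provided the expectations exist. Conversely, taking f(x) = exp(-ρx) recovers the hypothesis. -/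
open MeasureTheory Set Real

/-- Theorem 2 (direct part): if `E[X₁^p e^{-ρX₁}] ≥ E[X₂^p e^{-ρX₂}]` for all `ρ > 0`,
then `E[X₁^p f(X₁)] ≥ E[X₂^p f(X₂)]` for every `f` with a nonnegative Laplace
representation, provided the expectations exist. -/
theorem Gp_order_implies_cm_order {Ω : Type*} [MeasureSpace Ω]
    (ℙ : Measure Ω) [IsProbabilityMeasure ℙ]
    (X₁ X₂ : Ω → ℝ) (hX₁ : Measurable X₁) (hX₂ : Measurable X₂)
    (hX₁pos : ∀ ω, 0 ≤ X₁ ω) (hX₂pos : ∀ ω, 0 ≤ X₂ ω)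
    (p : ℝ) (hp : 0 ≤ p)
    (hord : ∀ ρ : ℝ, 0 < ρ →
      ∫ ω, X₂ ω ^ p * Real.exp (-ρ * X₂ ω) ∂ℙ ≤ ∫ ω, X₁ ω ^ p * Real.exp (-ρ * X₁ ω) ∂ℙ)
    (f μ : ℝ → ℝ) (hμ_meas : Measurable μ) (hμ_nonneg : ∀ u, 0 ≤ μ u)
    (hf : ∀ x : ℝ, 0 ≤ x → f x = ∫ u in Set.Ioi (0 : ℝ), Real.exp (-u * x) * μ u)
    (hint₁ : Integrable (fun ω => X₁ ω ^ p * f (X₁ ω)) ℙ)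
    (hint₂ : Integrable (fun ω => X₂ ω ^ p * f (X₂ ω)) ℙ)
    (hint₁' : Integrable (Function.uncurry fun ω u =>
      X₁ ω ^ p * (Real.exp (-u * X₁ ω) * μ u)) (ℙ.prod (volume.restrict (Set.Ioi 0))))
    (hint₂' : Integrable (Function.uncurry fun ω u =>
      X₂ ω ^ p * (Real.exp (-u * X₂ ω) * μ u)) (ℙ.prod (volume.restrict (Set.Ioi 0)))) :
    ∫ ω, X₂ ω ^ p * f (X₂ ω) ∂ℙ ≤ ∫ ω, X₁ ω ^ p * f (X₁ ω) ∂ℙ := by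
  have key : ∀ (X : Ω → ℝ), Measurable X → (∀ ω, 0 ≤ X ω) →
      Integrable (Function.uncurry fun ω u =>
        X ω ^ p * (Real.exp (-u * X ω) * μ u)) (ℙ.prod (volume.restrict (Set.Ioi 0))) →
      ∫ ω, X ω ^ p * f (X ω) ∂ℙ
        = ∫ u in Set.Ioi (0:ℝ), ∫ ω, X ω ^ p * (Real.exp (-u * X ω) * μ u) ∂ℙ := by
    intro X hX hXpos hint
    calc ∫ ω, X ω ^ p * f (X ω) ∂ℙ
        = ∫ ω, (∫ u in Set.Ioi (0:ℝ), X ω ^ p * (Real.exp (-u * X ω) * μ u)) ∂ℙ := by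
          refine integral_congr_ae (Filter.Eventually.of_forall fun ω => ?_)
          simp only [hf _ (hXpos ω), ← integral_const_mul]
      _ = _ := integral_integral_swap (f := fun ω u => X ω ^ p * (Real.exp (-u * X ω) * μ u)) hint
  rw [key X₁ hX₁ hX₁pos hint₁', key X₂ hX₂ hX₂pos hint₂']
  refine setIntegral_mono_on (hint₂'.integral_prod_right) (hint₁'.integral_prod_right)
    measurableSet_Ioi (fun u hu => ?_)
  have h2 : ∫ ω, X₂ ω ^ p * (Real.exp (-u * X₂ ω) * μ u) ∂ℙ
      = (∫ ω, X₂ ω ^ p * Real.exp (-u * X₂ ω) ∂ℙ) * μ u := by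
    rw [← integral_mul_const]; simp [mul_assoc]
  have h1 : ∫ ω, X₁ ω ^ p * (Real.exp (-u * X₁ ω) * μ u) ∂ℙ
      = (∫ ω, X₁ ω ^ p * Real.exp (-u * X₁ ω) ∂ℙ) * μ u := by
    rw [← integral_mul_const]; simp [mul_assoc]
  rw [h1, h2]
  exact mul_le_mul_of_nonneg_right (hord u hu) (hμ_nonneg u)
end

section
/- Let X₁, X₂ be nonnegative random variables and 0 ≤ q ≤ p. If E[X₁^p f(X₁)] ≥ E[X₂^p f(X₂)] holds for every completely monotone f (with existing expectations), then E[X₁^q g(X₁)] ≥ E[X₂^q g(X₂)] holds for every completely monotone g. In particular, X₁ ≤_{G_p} X₂ implies X₁ ≤_{G_q} X₂. -/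
open MeasureTheory Set Real

private lemma cm_neg_deriv {f : ℝ → ℝ} (hf : CompletelyMonotoneOn f) :
    CompletelyMonotoneOn (fun x => -derivWithin f (Set.Ioi 0) x) := by
  have hs : UniqueDiffOn ℝ (Set.Ioi (0:ℝ)) := uniqueDiffOn_Ioi 0
  constructor
  · exact (hf.1.derivWithin hs (mod_cast le_top)).neg
  · intro n x hx
    have h1 : iteratedDerivWithin n (fun x => -derivWithin f (Set.Ioi 0) x) (Set.Ioi 0) x
        = -iteratedDerivWithin n (derivWithin f (Set.Ioi 0)) (Set.Ioi 0) x :=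
      iteratedDerivWithin_neg (f := derivWithin f (Set.Ioi 0))
    have h2 : iteratedDerivWithin n (derivWithin f (Set.Ioi 0)) (Set.Ioi 0) x
        = iteratedDerivWithin (n+1) f (Set.Ioi 0) x := (congrFun iteratedDerivWithin_succ' x).symm
    have := hf.2 (n+1) x hx
    rw [h1, h2]
    have : (-1:ℝ)^n * -iteratedDerivWithin (n+1) f (Set.Ioi 0) x
        = (-1:ℝ)^(n+1) * iteratedDerivWithin (n+1) f (Set.Ioi 0) x := by ring
    rw [this]; exact hf.2 (n+1) x hx

private lemma cm_mul {f g : ℝ → ℝ} (hf : CompletelyMonotoneOn f) (hg : CompletelyMonotoneOn g) :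
    CompletelyMonotoneOn (fun x => f x * g x) := by
  have hs : UniqueDiffOn ℝ (Set.Ioi (0:ℝ)) := uniqueDiffOn_Ioi 0
  refine ⟨hf.1.mul hg.1, ?_⟩
  suffices h : ∀ n : ℕ, ∀ f g : ℝ → ℝ, CompletelyMonotoneOn f → CompletelyMonotoneOn g →
      ∀ x ∈ Set.Ioi (0:ℝ),
      0 ≤ (-1:ℝ)^n * iteratedDerivWithin n (fun x => f x * g x) (Set.Ioi 0) x by
    intro n x hx; exact h n f g hf hg x hx
  intro n
  induction n with
  | zero =>
    intro f g hf hg x hx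
    simp only [pow_zero, one_mul, iteratedDerivWithin_zero]
    have h0f := hf.2 0 x hx
    have h0g := hg.2 0 x hx
    simp only [pow_zero, one_mul, iteratedDerivWithin_zero] at h0f h0g
    exact mul_nonneg h0f h0g
  | succ n IH =>
    intro f g hf hg x hx
    set s := Set.Ioi (0:ℝ)
    have hF : CompletelyMonotoneOn (fun x => -derivWithin f s x) := cm_neg_deriv hf
    have hG : CompletelyMonotoneOn (fun x => -derivWithin g s x) := cm_neg_deriv hg
    have heq : Set.EqOn (derivWithin (fun x => f x * g x) s)
        (fun y => -(((-derivWithin f s y) * g y) + (f y * (-derivWithin g s y)))) s := by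
      intro y hy
      have hdf : DifferentiableWithinAt ℝ f s y := (hf.1.differentiableOn (by simp)) y hy
      have hdg : DifferentiableWithinAt ℝ g s y := (hg.1.differentiableOn (by simp)) y hy
      rw [show (fun x => f x * g x) = f * g from rfl, derivWithin_mul hdf hdg]
      ring
    have key : iteratedDerivWithin (n+1) (fun x => f x * g x) s x
        = -(iteratedDerivWithin n (fun y => (-derivWithin f s y) * g y) s x
            + iteratedDerivWithin n (fun y => f y * (-derivWithin g s y)) s x) := by
      rw [iteratedDerivWithin_succ']
      rw [iteratedDerivWithin_congr heq hx]
      have c1 : ContDiffOn ℝ n (fun y => (-derivWithin f s y) * g y) s :=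
        (hF.1.mul hg.1).of_le (mod_cast le_top)
      have c2 : ContDiffOn ℝ n (fun y => f y * (-derivWithin g s y)) s :=
        (hf.1.mul hG.1).of_le (mod_cast le_top)
      have : (fun y => -(((-derivWithin f s y) * g y) + (f y * (-derivWithin g s y))))
          = fun y => -((fun y => (-derivWithin f s y) * g y) y
              + (fun y => f y * (-derivWithin g s y)) y) := rfl
      rw [this]; refine (iteratedDerivWithin_neg (n := n) (s := s) (x := x) (f := fun y => (fun y => (-derivWithin f s y) * g y) y + (fun y => f y * (-derivWithin g s y)) y)).trans ?_
      congr 1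
      exact iteratedDerivWithin_add hx hs (c1 x hx) (c2 x hx)
    rw [key]
    have h1 := IH _ _ hF hg x hx
    have h2 := IH _ _ hf hG x hx
    have : (-1:ℝ)^(n+1) * -(iteratedDerivWithin n (fun y => (-derivWithin f s y) * g y) s x
            + iteratedDerivWithin n (fun y => f y * (-derivWithin g s y)) s x)
        = (-1:ℝ)^n * iteratedDerivWithin n (fun y => (-derivWithin f s y) * g y) s x
          + (-1:ℝ)^n * iteratedDerivWithin n (fun y => f y * (-derivWithin g s y)) s x := by
      ring
    rw [this]
    exact add_nonneg h1 h2

private lemma rpow_iterated {r : ℝ} (n : ℕ) :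
    ∀ x ∈ Set.Ioi (0:ℝ), iteratedDerivWithin n (fun x : ℝ => x ^ r) (Set.Ioi 0) x
      = (∏ i ∈ Finset.range n, (r - i)) * x ^ (r - n) := by
  have hs : UniqueDiffOn ℝ (Set.Ioi (0:ℝ)) := uniqueDiffOn_Ioi 0
  induction n with
  | zero => intro x hx; simp
  | succ n IH =>
    intro x hx
    rw [iteratedDerivWithin_succ]
    have heq : Set.EqOn (iteratedDerivWithin n (fun x : ℝ => x ^ r) (Set.Ioi 0))
        (fun x : ℝ => (∏ i ∈ Finset.range n, (r - i)) * x ^ (r - n)) (Set.Ioi 0) := IH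
    rw [derivWithin_congr heq (IH x hx)]
    have hd : HasDerivWithinAt (fun x : ℝ => (∏ i ∈ Finset.range n, (r - i)) * x ^ (r - n))
        ((∏ i ∈ Finset.range n, (r - i)) * ((r - n) * x ^ (r - n - 1))) (Set.Ioi 0) x :=
      ((Real.hasDerivAt_rpow_const (Or.inl (ne_of_gt hx))).const_mul _).hasDerivWithinAt
    rw [hd.derivWithin (hs.uniqueDiffWithinAt hx)]
    rw [Finset.prod_range_succ]
    rw [show r - ((n+1 : ℕ):ℝ) = r - (n:ℝ) - 1 by push_cast; ring, mul_assoc]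

private lemma cm_rpow {r : ℝ} (hr : r ≤ 0) : CompletelyMonotoneOn (fun x : ℝ => x ^ r) := by
  constructor
  · intro x hx
    exact (Real.contDiffAt_rpow_const_of_ne (ne_of_gt hx)).contDiffWithinAt
  · intro n x hx
    rw [rpow_iterated n x hx, ← mul_assoc]
    apply mul_nonneg
    · have h : ∏ i ∈ Finset.range n, ((i:ℝ) - r)
          = (-1:ℝ)^n * ∏ i ∈ Finset.range n, (r - i) := by
        calc ∏ i ∈ Finset.range n, ((i:ℝ) - r)
            = ∏ i ∈ Finset.range n, ((-1:ℝ) * (r - i)) :=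
              Finset.prod_congr rfl (fun i _ => by ring)
          _ = (∏ _i ∈ Finset.range n, (-1:ℝ)) * ∏ i ∈ Finset.range n, (r - i) :=
              Finset.prod_mul_distrib
          _ = (-1:ℝ)^n * ∏ i ∈ Finset.range n, (r - i) := by
              rw [Finset.prod_const, Finset.card_range]
      rw [← h]
      exact Finset.prod_nonneg fun i _ => by
        have := Nat.cast_nonneg (α := ℝ) i; linarith
    · exact Real.rpow_nonneg (le_of_lt hx) _

/-- Theorem 3 of the paper: if the p-th power-weighted expectations are ordered for
every completely monotone function, then so are the q-th weighted ones, for 0 ≤ q ≤ p. -/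
theorem Gp_order_mono_in_p {Ω : Type*} [MeasureSpace Ω]
    (ℙ : Measure Ω) [IsProbabilityMeasure ℙ]
    (X₁ X₂ : Ω → ℝ) (hX₁ : Measurable X₁) (hX₂ : Measurable X₂)
    (hX₁pos : ∀ ω, 0 < X₁ ω) (hX₂pos : ∀ ω, 0 < X₂ ω)
    (p q : ℝ) (hq : 0 ≤ q) (hpq : q ≤ p)
    (hord : ∀ f : ℝ → ℝ, CompletelyMonotoneOn f →
      ∫ ω, X₂ ω ^ p * f (X₂ ω) ∂ℙ ≤ ∫ ω, X₁ ω ^ p * f (X₁ ω) ∂ℙ) :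
    ∀ g : ℝ → ℝ, CompletelyMonotoneOn g →
      ∫ ω, X₂ ω ^ q * g (X₂ ω) ∂ℙ ≤ ∫ ω, X₁ ω ^ q * g (X₁ ω) ∂ℙ := by
  intro g hg
  have hf : CompletelyMonotoneOn (fun x : ℝ => x ^ (q - p) * g x) :=
    cm_mul (cm_rpow (by linarith)) hg
  have key := hord _ hf
  have hpt : ∀ (X : Ω → ℝ), (∀ ω, 0 < X ω) →
      (fun ω => X ω ^ p * (X ω ^ (q - p) * g (X ω))) = fun ω => X ω ^ q * g (X ω) := by
    intro X hX
    funext ω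
    rw [← mul_assoc, ← Real.rpow_add (hX ω), show p + (q - p) = q by ring]
  rwa [hpt X₁ hX₁pos, hpt X₂ hX₂pos] at key
end

section
/- There do not exist two nonnegative random variables X₁, X₂ with probability density functions f₁ ≠ f₂ such that X₁ ≤_{G_p} X₂ for all p ≥ 0. Equivalently: if for every nonnegative integer p and all ρ > 0 one has (-1)^p d^p/dρ^p [L₁(ρ) - L₂(ρ)] ≥ 0, where L_i is the Laplace transform of f_i, then f₁ - f₂ is the Laplace representing function of a completely monotone function, forcing f₁(x) ≥ f₂(x) for a.e. x, which contradicts ∫f₁ = ∫f₂ = 1 unless f₁ = f₂ a.e. -/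
open MeasureTheory Set Real

/-!
Put `g = f₁ - f₂` and let `L` be its Laplace transform. The case `p = 0` of the hypothesis says
`L ≥ 0` on `(0, ∞)`, the case `p = 1` says `L' ≤ 0` there, and `L 0 = ∫ g = 0`; hence `L` vanishes
on `[0, ∞)`. In particular `∫ e^{-n x} g(x) dx = 0` for all `n ∈ ℕ`, so `g` integrates to zero
against every polynomial in `e^{-x}`, hence (Weierstrass, after the substitution `t = e^{-x}`)
against every continuous function with compact support in `(0, ∞)`, and so `g = 0` a.e.
-/

open Filter

noncomputable def laplaceTransform (g : ℝ → ℝ) (ρ : ℝ) : ℝ :=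
  ∫ x in Ioi 0, exp (-ρ * x) * g x

lemma exp_neg_mul_le_one {ρ x : ℝ} (hρ : 0 ≤ ρ) (hx : 0 ≤ x) : exp (-ρ * x) ≤ 1 :=
  exp_le_one_iff.2 (by nlinarith)

lemma mul_exp_neg_mul_le_inv {ρ : ℝ} (hρ : 0 < ρ) (x : ℝ) : x * exp (-ρ * x) ≤ ρ⁻¹ := by
  have h : ρ * x ≤ exp (ρ * x) := by linarith [add_one_le_exp (ρ * x)]
  calc x * exp (-ρ * x) = ρ⁻¹ * (ρ * x * exp (-(ρ * x))) := by field_simp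
    _ ≤ ρ⁻¹ * (exp (ρ * x) * exp (-(ρ * x))) := by gcongr
    _ = ρ⁻¹ := by rw [← exp_add, add_neg_cancel, exp_zero, mul_one]

lemma mapsTo_exp_neg_Ioi_Icc : MapsTo (fun x => exp (-x)) (Ioi 0) (Icc 0 1) := fun _ hx =>
  ⟨(exp_pos _).le, exp_le_one_iff.2 (neg_nonpos.2 (le_of_lt hx))⟩

section LaplaceTransform

variable {g : ℝ → ℝ}

lemma integrableOn_exp_neg_mul_mul (hg : IntegrableOn g (Ioi 0)) {ρ : ℝ} (hρ : 0 ≤ ρ) :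
    IntegrableOn (fun x => exp (-ρ * x) * g x) (Ioi 0) :=
  Integrable.bdd_mul hg (by fun_prop : Continuous fun x => exp (-ρ * x)).aestronglyMeasurable
    (ae_restrict_of_forall_mem measurableSet_Ioi fun x hx => by
      rw [norm_of_nonneg (exp_pos _).le]
      exact exp_neg_mul_le_one hρ (le_of_lt hx))

lemma integrableOn_mul_exp_neg_mul_mul (hg : IntegrableOn g (Ioi 0)) {ρ : ℝ} (hρ : 0 < ρ) :
    IntegrableOn (fun x => x * exp (-ρ * x) * g x) (Ioi 0) :=
  Integrable.bdd_mul hg (by fun_prop : Continuous fun x => x * exp (-ρ * x)).aestronglyMeasurable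
    (ae_restrict_of_forall_mem measurableSet_Ioi fun x hx => by
      rw [norm_of_nonneg (mul_pos hx (exp_pos _)).le]
      exact mul_exp_neg_mul_le_inv hρ x)

lemma continuousOn_laplaceTransform (hg : IntegrableOn g (Ioi 0)) :
    ContinuousOn (laplaceTransform g) (Ici 0) :=
  continuousOn_of_dominated (bound := fun x => ‖g x‖)
    (fun _ hρ => (integrableOn_exp_neg_mul_mul hg hρ).aestronglyMeasurable)
    (fun _ hρ => ae_restrict_of_forall_mem measurableSet_Ioi fun x hx => by
      rw [norm_mul, norm_of_nonneg (exp_pos _).le]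
      exact mul_le_of_le_one_left (norm_nonneg _) (exp_neg_mul_le_one hρ (le_of_lt hx)))
    hg.norm (ae_of_all _ fun _ => by fun_prop)

lemma hasDerivAt_laplaceTransform (hg : IntegrableOn g (Ioi 0)) {ρ : ℝ} (hρ : 0 < ρ) :
    HasDerivAt (laplaceTransform g) (-∫ x in Ioi 0, x * exp (-ρ * x) * g x) ρ := by
  have hderiv (x σ : ℝ) :
      HasDerivAt (fun σ => exp (-σ * x) * g x) (-(x * exp (-σ * x) * g x)) σ :=
    (((hasDerivAt_neg σ).mul_const x).exp.mul_const (g x)).congr_deriv (by ring)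
  have hbound : ∀ᵐ x ∂volume.restrict (Ioi 0), ∀ σ ∈ Ioi (ρ / 2),
      ‖-(x * exp (-σ * x) * g x)‖ ≤ (ρ / 2)⁻¹ * ‖g x‖ :=
    ae_restrict_of_forall_mem measurableSet_Ioi fun x hx σ hσ => by
      rw [norm_neg, norm_mul, norm_of_nonneg (mul_pos hx (exp_pos _)).le]
      gcongr
      exact (mul_exp_neg_mul_le_inv ((half_pos hρ).trans hσ) x).trans
        (inv_anti₀ (half_pos hρ) hσ.le)
  rw [← integral_neg]
  exact (hasDerivAt_integral_of_dominated_loc_of_deriv_le (Ioi_mem_nhds (half_lt_self hρ))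
    (eventually_of_mem (Ioi_mem_nhds (half_lt_self hρ)) fun σ hσ =>
      (integrableOn_exp_neg_mul_mul hg (half_pos hρ |>.trans hσ).le).aestronglyMeasurable)
    (integrableOn_exp_neg_mul_mul hg hρ.le)
    (integrableOn_mul_exp_neg_mul_mul hg hρ).neg.aestronglyMeasurable
    hbound (hg.norm.const_mul _) (ae_of_all _ fun x σ _ => hderiv x σ)).2

lemma antitoneOn_laplaceTransform (hg : IntegrableOn g (Ioi 0))
    (h : ∀ ρ, 0 < ρ → 0 ≤ ∫ x in Ioi 0, x * exp (-ρ * x) * g x) :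
    AntitoneOn (laplaceTransform g) (Ici 0) := by
  refine antitoneOn_of_deriv_nonpos (convex_Ici 0) (continuousOn_laplaceTransform hg) ?_ ?_ <;>
    rw [interior_Ici]
  · exact fun ρ hρ => (hasDerivAt_laplaceTransform hg hρ).differentiableAt.differentiableWithinAt
  · intro ρ hρ
    rw [(hasDerivAt_laplaceTransform hg hρ).deriv]
    exact neg_nonpos.2 (h ρ hρ)

lemma integrableOn_comp_exp_neg_mul (hg : IntegrableOn g (Ioi 0)) {ψ : ℝ → ℝ}
    (hψ : ContinuousOn ψ (Icc 0 1)) :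
    IntegrableOn (fun x => ψ (exp (-x)) * g x) (Ioi 0) := by
  obtain ⟨C, hC⟩ := isCompact_Icc.exists_bound_of_continuousOn hψ
  exact Integrable.bdd_mul hg
    ((hψ.comp (by fun_prop) mapsTo_exp_neg_Ioi_Icc).aestronglyMeasurable measurableSet_Ioi)
    (ae_restrict_of_forall_mem measurableSet_Ioi fun x hx => hC _ (mapsTo_exp_neg_Ioi_Icc hx))

lemma setIntegral_eval_exp_neg_mul_eq_zero (hg : IntegrableOn g (Ioi 0))
    (hL : ∀ n : ℕ, laplaceTransform g n = 0) (q : Polynomial ℝ) :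
    ∫ x in Ioi 0, q.eval (exp (-x)) * g x = 0 := by
  have hterm (i : ℕ) : (fun x => q.coeff i * exp (-x) ^ i * g x) =
      fun x => q.coeff i * (exp (-(i : ℝ) * x) * g x) := by
    ext x
    rw [← exp_nat_mul]
    ring_nf
  simp_rw [Polynomial.eval_eq_sum_range, Finset.sum_mul]
  rw [integral_finsetSum _ fun i _ => ?_]
  · refine Finset.sum_eq_zero fun i _ => ?_
    rw [hterm, integral_const_mul]
    exact mul_eq_zero_of_right _ (hL i)
  · rw [hterm]
    exact (integrableOn_exp_neg_mul_mul hg i.cast_nonneg).const_mul _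

lemma setIntegral_comp_exp_neg_mul_eq_zero (hg : IntegrableOn g (Ioi 0))
    (hL : ∀ n : ℕ, laplaceTransform g n = 0) {ψ : ℝ → ℝ} (hψ : ContinuousOn ψ (Icc 0 1)) :
    ∫ x in Ioi 0, ψ (exp (-x)) * g x = 0 := by
  set C := ∫ x in Ioi 0, |g x|
  refine abs_nonpos_iff.1 (le_of_forall_pos_le_add fun ε hε => ?_)
  have hεC : 0 < ε / (C + 1) := by positivity
  obtain ⟨q, hq⟩ := exists_polynomial_near_of_continuousOn 0 1 ψ hψ _ hεC
  calc |∫ x in Ioi 0, ψ (exp (-x)) * g x|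
      = |∫ x in Ioi 0, (ψ (exp (-x)) - q.eval (exp (-x))) * g x| := by
        simp_rw [sub_mul]
        rw [integral_sub (integrableOn_comp_exp_neg_mul hg hψ)
          (integrableOn_comp_exp_neg_mul hg q.continuous.continuousOn),
          setIntegral_eval_exp_neg_mul_eq_zero hg hL, sub_zero]
    _ ≤ ∫ x in Ioi 0, ε / (C + 1) * |g x| := by
        rw [← norm_eq_abs]
        refine norm_integral_le_of_norm_le (hg.abs.const_mul _)
          (ae_restrict_of_forall_mem measurableSet_Ioi fun x hx => ?_)
        rw [norm_mul, norm_eq_abs, norm_eq_abs, abs_sub_comm]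
        exact mul_le_mul_of_nonneg_right (hq _ (mapsTo_exp_neg_Ioi_Icc hx)).le (abs_nonneg _)
    _ = ε / (C + 1) * C := integral_const_mul _ _
    _ ≤ 0 + ε := by
        have hC : 0 ≤ C := integral_nonneg fun _ => abs_nonneg _
        rw [zero_add, div_mul_eq_mul_div, div_le_iff₀ (by positivity)]
        nlinarith

lemma setIntegral_mul_eq_zero_of_tsupport_subset (hg : IntegrableOn g (Ioi 0))
    (hL : ∀ n : ℕ, laplaceTransform g n = 0) {φ : ℝ → ℝ} (hφ : Continuous φ)
    (hφc : HasCompactSupport φ) (hφs : tsupport φ ⊆ Ioi 0) :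
    ∫ x in Ioi 0, φ x * g x = 0 := by
  -- `φ x = ψ (exp (-x))` for `ψ t = φ (-log t)`; at `t = 0` (where `log 0 = 0`) `ψ` is continuous
  -- because `φ` vanishes both at `0` and near `+∞`.
  have hψ : Continuous fun t => φ (-log t) := continuous_iff_continuousAt.2 fun t => by
    rcases eq_or_ne t 0 with rfl | ht
    · have hφ0 : φ 0 = 0 := image_eq_zero_of_notMem_tsupport fun h => lt_irrefl (0 : ℝ) (hφs h)
      refine continuousWithinAt_compl_self.1 ?_
      simp only [ContinuousWithinAt, log_zero, neg_zero, hφ0]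
      exact (hφc.is_zero_at_infty.mono_left atTop_le_cocompact).comp
        (tendsto_neg_atBot_atTop.comp tendsto_log_nhdsNE_zero)
    · exact hφ.continuousAt.comp (continuousAt_log ht).neg
  simpa only [log_exp, neg_neg] using setIntegral_comp_exp_neg_mul_eq_zero hg hL hψ.continuousOn

theorem ae_eq_zero_of_laplaceTransform_natCast_eq_zero (hg : IntegrableOn g (Ioi 0))
    (hL : ∀ n : ℕ, laplaceTransform g n = 0) : g =ᵐ[volume.restrict (Ioi 0)] 0 := by
  refine (ae_restrict_iff' measurableSet_Ioi).2
    (isOpen_Ioi.ae_eq_zero_of_integral_contDiff_smul_eq_zero hg.locallyIntegrableOn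
      fun φ hφ hφc hφs => ?_)
  rw [← setIntegral_eq_integral_of_forall_compl_eq_zero fun x hx => by
    rw [image_eq_zero_of_notMem_tsupport fun h => hx (hφs h), zero_smul]]
  exact setIntegral_mul_eq_zero_of_tsupport_subset hg hL hφ.continuous hφc hφs

end LaplaceTransform

theorem no_Gp_order_for_all_p_general (f₁ f₂ : ℝ → ℝ)
    (h₁_int : Integrable f₁ (volume.restrict (Set.Ioi 0)))
    (h₂_int : Integrable f₂ (volume.restrict (Set.Ioi 0)))
    (h₁_pdf : ∫ x in Set.Ioi (0 : ℝ), f₁ x = 1)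
    (h₂_pdf : ∫ x in Set.Ioi (0 : ℝ), f₂ x = 1)
    (hord : ∀ p : ℝ, 0 ≤ p → ∀ ρ : ℝ, 0 < ρ →
      ∫ x in Set.Ioi (0 : ℝ), x ^ p * Real.exp (-ρ * x) * f₂ x ≤
        ∫ x in Set.Ioi (0 : ℝ), x ^ p * Real.exp (-ρ * x) * f₁ x) :
    f₁ =ᵐ[volume.restrict (Set.Ioi 0)] f₂ := by
  have hg : IntegrableOn (f₁ - f₂) (Ioi 0) := h₁_int.sub h₂_int
  have hsub (k : ℝ → ℝ) (hk₁ : IntegrableOn (fun x => k x * f₁ x) (Ioi 0))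
      (hk₂ : IntegrableOn (fun x => k x * f₂ x) (Ioi 0)) :
      ∫ x in Ioi 0, k x * (f₁ - f₂) x = (∫ x in Ioi 0, k x * f₁ x) - ∫ x in Ioi 0, k x * f₂ x := by
    simp only [Pi.sub_apply, mul_sub]
    exact integral_sub hk₁ hk₂
  have hL_zero : laplaceTransform (f₁ - f₂) 0 = 0 := by
    simp [laplaceTransform, integral_sub h₁_int h₂_int, h₁_pdf, h₂_pdf]
  have hL_nonneg (ρ : ℝ) (hρ : 0 < ρ) : 0 ≤ laplaceTransform (f₁ - f₂) ρ := by
    have h := hord 0 le_rfl ρ hρ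
    simp only [rpow_zero, one_mul] at h
    rw [laplaceTransform, hsub (fun x => exp (-ρ * x)) (integrableOn_exp_neg_mul_mul h₁_int hρ.le)
      (integrableOn_exp_neg_mul_mul h₂_int hρ.le)]
    linarith
  have hL_anti := antitoneOn_laplaceTransform hg fun ρ hρ => by
    have h := hord 1 zero_le_one ρ hρ
    simp only [rpow_one] at h
    rw [hsub (fun x => x * exp (-ρ * x)) (integrableOn_mul_exp_neg_mul_mul h₁_int hρ)
      (integrableOn_mul_exp_neg_mul_mul h₂_int hρ)]
    linarith
  have hL (n : ℕ) : laplaceTransform (f₁ - f₂) n = 0 := by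
    rcases (Nat.cast_nonneg (α := ℝ) n).eq_or_lt with hn | hn
    · rw [← hn, hL_zero]
    · exact le_antisymm (hL_zero ▸ hL_anti self_mem_Ici hn.le hn.le) (hL_nonneg n hn)
  filter_upwards [ae_eq_zero_of_laplaceTransform_natCast_eq_zero hg hL] with x hx
  exact sub_eq_zero.1 hx

/-- Theorem 4 of the paper: no two nonnegative random variables with (essentially)
distinct densities can satisfy `X₁ ≤_{G_p} X₂` for every `p ≥ 0`. Formulated with
densities: if `f₁, f₂` are probability densities on `(0,∞)` and for every `p ≥ 0`,
`ρ > 0` we have `∫ x^p e^{-ρx} f₁(x) dx ≥ ∫ x^p e^{-ρx} f₂(x) dx`, then `f₁ = f₂` a.e. -/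
theorem no_Gp_order_for_all_p (f₁ f₂ : ℝ → ℝ)
    (h₁_meas : Measurable f₁) (h₂_meas : Measurable f₂)
    (h₁_nonneg : ∀ x, 0 ≤ f₁ x) (h₂_nonneg : ∀ x, 0 ≤ f₂ x)
    (h₁_int : Integrable f₁ (volume.restrict (Set.Ioi 0)))
    (h₂_int : Integrable f₂ (volume.restrict (Set.Ioi 0)))
    (h₁_pdf : ∫ x in Set.Ioi (0 : ℝ), f₁ x = 1)
    (h₂_pdf : ∫ x in Set.Ioi (0 : ℝ), f₂ x = 1)
    (hord : ∀ p : ℝ, 0 ≤ p → ∀ ρ : ℝ, 0 < ρ →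
      ∫ x in Set.Ioi (0 : ℝ), x ^ p * Real.exp (-ρ * x) * f₂ x ≤
        ∫ x in Set.Ioi (0 : ℝ), x ^ p * Real.exp (-ρ * x) * f₁ x) :
    f₁ =ᵐ[volume.restrict (Set.Ioi 0)] f₂ :=
  no_Gp_order_for_all_p_general f₁ f₂ h₁_int h₂_int h₁_pdf h₂_pdf hord
end
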